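/- arXiv:1610.03465 — 4 statements merged into one kernel-verified Lean document; each statement's English description precedes it below -/
import Mathlib

section
/- For every integer k ≥ 1, the function W(ξ) = ξ^{1/4} · (sin √ξ)^{1/2} · φ_k(sin²(√ξ/2)) is twice differentiable on (0, π²) and satisfies W''(ξ) + (u²/(4ξ) + 1/(4ξ²) + ψ(ξ)/ξ) · W(ξ) = 0 for all ξ ∈ (0, π²), where u = k − 1/2 and ψ(ξ) = 1/(16 sin²√ξ) − 1/(16ξ). -/
noncomputable section

open Finset

/-- The digamma function `ψ = Γ′/Γ`. -/
def digamma (x : ℝ) : ℝ := deriv Real.Gamma x / Real.Gamma x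

/-- The function `φ_k` defined for `0 < x < 1` by
`φ_k(x) = −2 log x · Σ_{n=0}^{k−1} (−1)^n (Γ(k+n)/(Γ(k−n)(n!)²)) x^n
  − 2 Σ_{n=0}^{k−1} (−1)^n (Γ(k+n)/(Γ(k−n)(n!)²)) (−2ψ(n+1) + ψ(k+n) + ψ(k−n)) x^n
  + 2(−1)^k Σ_{n=k}^{∞} (Γ(n+k) Γ(n−k+1) / Γ(n+1)²) x^n`
(the final infinite series is reindexed by `n = k + m`). -/
def phi (k : ℕ) (x : ℝ) : ℝ :=
  -2 * Real.log x * ∑ n ∈ Finset.range k,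
      (-1 : ℝ) ^ n * (Real.Gamma ((k : ℝ) + n) /
        (Real.Gamma ((k : ℝ) - n) * ((Nat.factorial n : ℝ)) ^ 2)) * x ^ n
  - 2 * ∑ n ∈ Finset.range k,
      (-1 : ℝ) ^ n * (Real.Gamma ((k : ℝ) + n) /
        (Real.Gamma ((k : ℝ) - n) * ((Nat.factorial n : ℝ)) ^ 2)) *
        (-2 * digamma ((n : ℝ) + 1) + digamma ((k : ℝ) + n) + digamma ((k : ℝ) - n)) * x ^ n
  + 2 * (-1 : ℝ) ^ k * ∑' m : ℕ,
      (Real.Gamma ((k : ℝ) + m + k) * Real.Gamma ((m : ℝ) + 1) /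
        (Real.Gamma ((k : ℝ) + m + 1)) ^ 2) * x ^ (k + m)

namespace LGaux


lemma summable_aux {d : ℕ} {x : ℝ} (hx : |x| < 1) :
    Summable (fun n : ℕ => ((n : ℝ) + 1) ^ d * x ^ n) := by
  rcases eq_or_ne x 0 with rfl | hx0
  · apply summable_of_ne_finset_zero (s := {0})
    intro n hn
    simp only [mem_singleton] at hn
    simp [zero_pow hn]
  · have h := summable_pow_mul_geometric_of_norm_lt_one d (r := x) (by simpa using hx)
    have h2 : Summable fun n : ℕ => ((n + 1 : ℕ) : ℝ) ^ d * x ^ (n + 1) :=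
      (summable_nat_add_iff 1).2 h
    have h3 := h2.mul_left x⁻¹
    apply h3.congr
    intro n
    push_cast
    field_simp
    ring

lemma summable_coeff_pow {c : ℕ → ℝ} {C : ℝ} {d : ℕ}
    (hc : ∀ n, |c n| ≤ C * ((n : ℝ) + 1) ^ d) {x : ℝ} (hx : |x| < 1) :
    Summable (fun n : ℕ => c n * x ^ n) := by
  refine Summable.of_norm_bounded (g := fun n => (C * ((n : ℝ) + 1) ^ d) * |x| ^ n)
    (((summable_aux (d := d) (x := |x|) (by rwa [abs_abs])).mul_left C).congr
      (by intro n; push_cast; ring)) ?_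
  intro n
  rw [norm_mul, norm_pow, Real.norm_eq_abs, Real.norm_eq_abs]
  exact mul_le_mul_of_nonneg_right (hc n) (by positivity)

lemma hasDerivAt_tsum_pow {c : ℕ → ℝ} {C : ℝ} {d : ℕ}
    (hc : ∀ n, |c n| ≤ C * ((n : ℝ) + 1) ^ d) {x : ℝ} (hx : |x| < 1) :
    HasDerivAt (fun y : ℝ => ∑' n, c n * y ^ n)
      (∑' n : ℕ, ((n : ℝ) + 1) * c (n + 1) * x ^ n) x := by
  have hC : 0 ≤ C := by
    have h0 := hc 0; simp at h0; linarith [abs_nonneg (c 0)]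
  set r : ℝ := (1 + |x|) / 2 with hr
  have hxa : 0 ≤ |x| := abs_nonneg x
  have hr0 : 0 < r := by positivity
  have hr1 : r < 1 := by simp only [hr]; linarith
  have hxr : |x| < r := by simp only [hr]; linarith
  set u : ℕ → ℝ := fun n => (C / r) * ((n : ℝ) + 1) ^ (d + 1) * r ^ n with hu
  have hu_sum : Summable u := by
    apply ((summable_aux (d := d + 1) (x := r) (by rw [abs_of_pos hr0]; exact hr1)).mul_left
      (C / r)).congr
    intro n; simp only [hu]; ring
  have hbound : ∀ n : ℕ, ∀ y : ℝ, |y| ≤ r → ‖c n * ((n : ℝ) * y ^ (n - 1))‖ ≤ u n := by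
    intro n y hy
    rw [Real.norm_eq_abs, abs_mul, abs_mul, abs_pow]
    have h1 : |c n| ≤ C * ((n : ℝ) + 1) ^ d := hc n
    have h2 : |(n : ℝ)| * |y| ^ (n - 1) ≤ ((n : ℝ) + 1) * r ^ n / r := by
      cases n with
      | zero => simp only [Nat.cast_zero, abs_zero, zero_mul]; positivity
      | succ m =>
        rw [Nat.add_sub_cancel]
        have habs : |((m + 1 : ℕ) : ℝ)| = (m : ℝ) + 1 := by
          rw [abs_of_nonneg (by positivity)]; push_cast; ring
        rw [habs]
        have hyp : |y| ^ m ≤ r ^ m := pow_le_pow_left₀ (abs_nonneg y) hy m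
        have hRHS : (((m + 1 : ℕ) : ℝ) + 1) * r ^ (m + 1) / r = ((m : ℝ) + 2) * r ^ m := by
          rw [pow_succ]; push_cast; field_simp; ring
        rw [hRHS]
        nlinarith [pow_nonneg (abs_nonneg y) m, pow_nonneg hr0.le m,
          mul_nonneg (by positivity : (0:ℝ) ≤ (m : ℝ) + 1) (sub_nonneg.2 hyp)]
    calc |c n| * (|(n : ℝ)| * |y| ^ (n - 1)) ≤
        (C * ((n : ℝ) + 1) ^ d) * (((n : ℝ) + 1) * r ^ n / r) := by
          apply mul_le_mul h1 h2 (by positivity) (by positivity)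
      _ = u n := by simp only [hu]; rw [pow_succ]; field_simp
  have key : HasDerivAt (fun y : ℝ => ∑' n, c n * y ^ n)
      (∑' n, c n * ((n : ℝ) * x ^ (n - 1))) x := by
    apply hasDerivAt_tsum_of_isPreconnected hu_sum (isOpen_Ioo (a := -r) (b := r))
      (convex_Ioo _ _).isPreconnected
      (fun n y _ => (hasDerivAt_pow n y).const_mul (c n))
      (fun n y hy => hbound n y (le_of_lt (abs_lt.2 ⟨hy.1, hy.2⟩)))
      (y₀ := 0) (by constructor <;> [linarith; exact hr0])
      ?_ (abs_lt.1 hxr)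
    · apply summable_of_ne_finset_zero (s := {0})
      intro n hn
      simp only [mem_singleton] at hn
      simp [zero_pow hn]
  have hs : Summable fun n => c n * ((n : ℝ) * x ^ (n - 1)) :=
    Summable.of_norm_bounded hu_sum (fun n => hbound n x hxr.le)
  have : (∑' n, c n * ((n : ℝ) * x ^ (n - 1))) = ∑' n : ℕ, ((n : ℝ) + 1) * c (n + 1) * x ^ n := by
    rw [Summable.tsum_eq_zero_add hs]
    simp only [Nat.cast_zero, zero_mul, mul_zero, zero_add, Nat.add_sub_cancel]
    apply tsum_congr
    intro n; push_cast; ring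
  rwa [this] at key


/-- coefficient of the polynomial part -/
def pC (k n : ℕ) : ℝ :=
  (-1 : ℝ) ^ n * (Nat.factorial (k + n - 1) : ℝ) /
    ((Nat.factorial (k - n - 1) : ℝ) * (Nat.factorial n : ℝ) ^ 2)

/-- digamma combination -/
def dC (k n : ℕ) : ℝ :=
  -2 * digamma ((n : ℝ) + 1) + digamma ((k : ℝ) + n) + digamma ((k : ℝ) - n)

/-- coefficient of the infinite series part -/
def aC (k m : ℕ) : ℝ :=
  (Nat.factorial (2 * k + m - 1) : ℝ) * (Nat.factorial m : ℝ) /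
    (Nat.factorial (k + m) : ℝ) ^ 2

def cS (k n : ℕ) : ℝ := if k ≤ n then aC k (n - k) else 0

def pS (k n : ℕ) : ℝ := if n < k then pC k n else 0
def rS (k n : ℕ) : ℝ := if n < k then pC k n * dC k n else 0
def sC (k n : ℕ) : ℝ := if n = k - 1 then (k : ℝ) ^ 2 * aC k 0 else 0
def CP (k : ℕ) : ℝ := ∑ m ∈ range k, |pC k m|
def CR (k : ℕ) : ℝ := ∑ m ∈ range k, |pC k m * dC k m|


lemma Gamma_cast_nat {N : ℕ} (hN : 1 ≤ N) : Real.Gamma (N : ℝ) = (Nat.factorial (N - 1) : ℝ) := by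
  obtain ⟨M, rfl⟩ := Nat.exists_eq_add_of_le hN
  rw [show ((1 + M : ℕ) : ℝ) = (M : ℝ) + 1 by push_cast; ring, Real.Gamma_nat_eq_factorial]
  simp

lemma aC_pos (k m : ℕ) : 0 < aC k m := by
  unfold aC
  positivity

lemma aC_rec {k : ℕ} (hk : 1 ≤ k) (m : ℕ) :
    aC k (m + 1) * ((k : ℝ) + m + 1) ^ 2 = aC k m * ((2 * (k : ℝ) + m) * ((m : ℝ) + 1)) := by
  unfold aC
  have h1 : 2 * k + (m + 1) - 1 = (2 * k + m - 1) + 1 := by omega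
  have h2 : 2 * k + m - 1 + 1 = 2 * k + m := by omega
  have h3 : k + (m + 1) = (k + m) + 1 := by omega
  rw [h1, h3, Nat.factorial_succ, Nat.factorial_succ, Nat.factorial_succ, h2]
  have e1 : (Nat.factorial (k + m) : ℝ) ≠ 0 := by positivity
  have e2 : (Nat.factorial (2 * k + m - 1) : ℝ) ≠ 0 := by positivity
  push_cast [h2]
  field_simp

lemma aC_le (k : ℕ) (hk : 1 ≤ k) (m : ℕ) : aC k m ≤ aC k 0 := by
  induction m with
  | zero => exact le_refl _
  | succ m ih =>
    have hrec := aC_rec hk m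
    have hp := aC_pos k m
    have hq := aC_pos k (m + 1)
    have hd : (0:ℝ) < ((k : ℝ) + m + 1) ^ 2 := by positivity
    have hratio : (2 * (k : ℝ) + m) * ((m : ℝ) + 1) ≤ ((k : ℝ) + m + 1) ^ 2 := by
      have : (1:ℝ) ≤ (k:ℝ) := by exact_mod_cast hk
      nlinarith [sq_nonneg ((k:ℝ) - 1)]
    have : aC k (m + 1) ≤ aC k m := by
      rw [← mul_le_mul_iff_of_pos_right hd, hrec]
      nlinarith
    linarith

lemma cS_bound (k : ℕ) (hk : 1 ≤ k) (n : ℕ) : |cS k n| ≤ aC k 0 * ((n : ℝ) + 1) ^ 0 := by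
  rw [pow_zero, mul_one]
  unfold cS
  split
  · rw [abs_of_pos (aC_pos _ _)]; exact aC_le k hk _
  · rw [abs_zero]; exact (aC_pos k 0).le

lemma pC_rec {k n : ℕ} (h : n + 1 < k) :
    ((n : ℝ) + 1) ^ 2 * pC k (n + 1) = ((n : ℝ) + k) * ((n : ℝ) - k + 1) * pC k n := by
  unfold pC
  have h1 : k + (n + 1) - 1 = (k + n - 1) + 1 := by omega
  have h2 : k + n - 1 + 1 = k + n := by omega
  have h3 : k - n - 1 = (k - (n + 1) - 1) + 1 := by omega
  rw [h1, Nat.factorial_succ, h2, h3, Nat.factorial_succ, Nat.factorial_succ]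
  have e0 : ((k - (n + 1) - 1 + 1 : ℕ) : ℝ) = (k : ℝ) - n - 1 := by
    have : k - (n + 1) - 1 + 1 = k - n - 1 := by omega
    rw [this, Nat.cast_sub (by omega), Nat.cast_sub (by omega)]
    push_cast; ring
  have f1 : ((k - (n + 1) - 1).factorial : ℝ) ≠ 0 := by positivity
  have f2 : (n.factorial : ℝ) ≠ 0 := by positivity
  have f3 : (k : ℝ) - (n : ℝ) - 1 ≠ 0 := by
    have : (n : ℝ) + 2 ≤ (k : ℝ) := by exact_mod_cast h
    intro hc; linarith
  push_cast [e0]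
  rw [pow_succ]
  field_simp
  ring

lemma digamma_add_one {x : ℝ} (hx : 0 < x) : digamma (x + 1) = digamma x + 1 / x := by
  have hne : ∀ m : ℕ, x ≠ -(m : ℝ) := by
    intro m hm
    have : (0:ℝ) ≤ (m : ℝ) := Nat.cast_nonneg m
    have hx1 : (0:ℝ) < x + 1 := by linarith
    rw [hm] at hx1; linarith
  have hne1 : ∀ m : ℕ, x + 1 ≠ -(m : ℝ) := by
    intro m hm
    have : (0:ℝ) ≤ (m : ℝ) := Nat.cast_nonneg m
    have hx1 : (0:ℝ) < x + 1 := by linarith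
    rw [hm] at hx1; linarith
  have hd : DifferentiableAt ℝ Real.Gamma x := Real.differentiableAt_Gamma hne
  have h2 : HasDerivAt (fun y => y * Real.Gamma y)
      (1 * Real.Gamma x + x * deriv Real.Gamma x) x :=
    (hasDerivAt_id x).mul hd.hasDerivAt
  have heq : (fun y => Real.Gamma (y + 1)) =ᶠ[nhds x] (fun y => y * Real.Gamma y) := by
    filter_upwards [eventually_ne_nhds hx.ne'] with y hy
    exact Real.Gamma_add_one hy
  have h3 : HasDerivAt (fun y => Real.Gamma (y + 1))
      (1 * Real.Gamma x + x * deriv Real.Gamma x) x := h2.congr_of_eventuallyEq heq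
  have h4 : HasDerivAt (fun y => Real.Gamma (y + 1)) (deriv Real.Gamma (x + 1) * 1) x :=
    by have := (Real.differentiableAt_Gamma hne1).hasDerivAt.comp x ((hasDerivAt_id x).add_const 1); exact this
  have hder : deriv Real.Gamma (x + 1) = Real.Gamma x + x * deriv Real.Gamma x := by
    have := h4.unique h3
    rw [mul_one] at this
    rw [this]; ring
  unfold digamma
  rw [hder, Real.Gamma_add_one hx.ne']
  have hΓ : Real.Gamma x ≠ 0 := (Real.Gamma_pos_of_pos hx).ne'
  field_simp
  ring

lemma digamma_nat_add_one (n : ℕ) :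
    digamma ((n : ℝ) + 1 + 1) = digamma ((n : ℝ) + 1) + 1 / ((n : ℝ) + 1) :=
  digamma_add_one (by positivity)

lemma dC_rec {k n : ℕ} (h : n + 1 < k) :
    dC k (n + 1) = dC k n + (-2 / ((n : ℝ) + 1) + 1 / ((k : ℝ) + n) - 1 / ((k : ℝ) - n - 1)) := by
  unfold dC
  have e1 : digamma ((n : ℝ) + 1 + 1) = digamma ((n : ℝ) + 1) + 1 / ((n : ℝ) + 1) :=
    digamma_add_one (by positivity)
  have hkn : (0:ℝ) < (k : ℝ) + n := by
    have : (1:ℝ) ≤ (k:ℝ) := by exact_mod_cast (by omega : 1 ≤ k)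
    positivity
  have e2 : digamma ((k : ℝ) + n + 1) = digamma ((k : ℝ) + n) + 1 / ((k : ℝ) + n) :=
    digamma_add_one hkn
  have hkn2 : (0:ℝ) < (k : ℝ) - n - 1 := by
    have : (n:ℝ) + 2 ≤ (k : ℝ) := by exact_mod_cast h
    linarith
  have e3 : digamma ((k : ℝ) - n - 1 + 1) = digamma ((k : ℝ) - n - 1) + 1 / ((k : ℝ) - n - 1) :=
    digamma_add_one hkn2
  have c1 : ((n + 1 : ℕ) : ℝ) + 1 = (n : ℝ) + 1 + 1 := by push_cast; ring
  have c2 : (k : ℝ) + ((n + 1 : ℕ) : ℝ) = (k : ℝ) + n + 1 := by push_cast; ring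
  have c3 : (k : ℝ) - ((n + 1 : ℕ) : ℝ) = (k : ℝ) - n - 1 := by push_cast; ring
  have c4 : (k : ℝ) - (n : ℝ) = (k : ℝ) - n - 1 + 1 := by ring
  rw [c1, c2, c3, e1, e2]
  nth_rewrite 2 [c4]
  rw [e3]
  ring

def Pf (k : ℕ) (x : ℝ) : ℝ := ∑' n : ℕ, pS k n * x ^ n
def Pf1 (k : ℕ) (x : ℝ) : ℝ := ∑' n : ℕ, ((n : ℝ) + 1) * pS k (n + 1) * x ^ n
def Pf2 (k : ℕ) (x : ℝ) : ℝ :=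
  ∑' n : ℕ, ((n : ℝ) + 1) * ((((n + 1 : ℕ) : ℝ)) + 1) * pS k (n + 2) * x ^ n
def Rf (k : ℕ) (x : ℝ) : ℝ := ∑' n : ℕ, rS k n * x ^ n
def Rf1 (k : ℕ) (x : ℝ) : ℝ := ∑' n : ℕ, ((n : ℝ) + 1) * rS k (n + 1) * x ^ n
def Rf2 (k : ℕ) (x : ℝ) : ℝ :=
  ∑' n : ℕ, ((n : ℝ) + 1) * ((((n + 1 : ℕ) : ℝ)) + 1) * rS k (n + 2) * x ^ n
def Sf (k : ℕ) (x : ℝ) : ℝ := ∑' n : ℕ, cS k n * x ^ n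
def Sf1 (k : ℕ) (x : ℝ) : ℝ := ∑' n : ℕ, ((n : ℝ) + 1) * cS k (n + 1) * x ^ n
def Sf2 (k : ℕ) (x : ℝ) : ℝ :=
  ∑' n : ℕ, ((n : ℝ) + 1) * ((((n + 1 : ℕ) : ℝ)) + 1) * cS k (n + 2) * x ^ n

lemma Pf_eq_sum (k : ℕ) (x : ℝ) : Pf k x = ∑ n ∈ range k, pC k n * x ^ n := by
  unfold Pf
  rw [tsum_eq_sum (s := range k) (fun n hn => by
    unfold pS; rw [if_neg (by simpa using hn), zero_mul])]
  exact Finset.sum_congr rfl fun n hn => by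
    unfold pS; rw [if_pos (by simpa using hn)]

lemma Rf_eq_sum (k : ℕ) (x : ℝ) : Rf k x = ∑ n ∈ range k, pC k n * dC k n * x ^ n := by
  unfold Rf
  rw [tsum_eq_sum (s := range k) (fun n hn => by
    unfold rS; rw [if_neg (by simpa using hn), zero_mul])]
  exact Finset.sum_congr rfl fun n hn => by
    unfold rS; rw [if_pos (by simpa using hn)]

lemma phi_eq {k : ℕ} (hk : 1 ≤ k) (x : ℝ) :
    phi k x = -2 * Real.log x * Pf k x - 2 * Rf k x + 2 * (-1 : ℝ) ^ k * Sf k x := by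
  rw [Pf_eq_sum, Rf_eq_sum]
  unfold phi Sf
  have hterm : ∀ n ∈ range k,
      (-1 : ℝ) ^ n * (Real.Gamma ((k : ℝ) + n) /
        (Real.Gamma ((k : ℝ) - n) * ((Nat.factorial n : ℝ)) ^ 2)) = pC k n := by
    intro n hn
    rw [mem_range] at hn
    have g1 : Real.Gamma ((k : ℝ) + n) = (Nat.factorial (k + n - 1) : ℝ) := by
      rw [show (k : ℝ) + n = ((k + n : ℕ) : ℝ) by push_cast; ring]
      exact Gamma_cast_nat (by omega)
    have g2 : Real.Gamma ((k : ℝ) - n) = (Nat.factorial (k - n - 1) : ℝ) := by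
      rw [show (k : ℝ) - n = ((k - n : ℕ) : ℝ) by
        rw [Nat.cast_sub (by omega)]]
      exact Gamma_cast_nat (by omega)
    rw [g1, g2]
    unfold pC
    ring
  have hsum1 : ∀ n ∈ range k,
      (-1 : ℝ) ^ n * (Real.Gamma ((k : ℝ) + n) /
        (Real.Gamma ((k : ℝ) - n) * ((Nat.factorial n : ℝ)) ^ 2)) * x ^ n = pC k n * x ^ n :=
    fun n hn => by rw [hterm n hn]
  have hsum2 : ∀ n ∈ range k,
      (-1 : ℝ) ^ n * (Real.Gamma ((k : ℝ) + n) /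
        (Real.Gamma ((k : ℝ) - n) * ((Nat.factorial n : ℝ)) ^ 2)) *
        (-2 * digamma ((n : ℝ) + 1) + digamma ((k : ℝ) + n) + digamma ((k : ℝ) - n)) * x ^ n
        = pC k n * dC k n * x ^ n :=
    fun n hn => by rw [hterm n hn]; rfl
  rw [Finset.sum_congr rfl hsum1, Finset.sum_congr rfl hsum2]
  have htsum : (∑' m : ℕ, (Real.Gamma ((k : ℝ) + m + k) * Real.Gamma ((m : ℝ) + 1) /
        (Real.Gamma ((k : ℝ) + m + 1)) ^ 2) * x ^ (k + m)) = ∑' n : ℕ, cS k n * x ^ n := by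
    have hterm2 : ∀ m : ℕ, (Real.Gamma ((k : ℝ) + m + k) * Real.Gamma ((m : ℝ) + 1) /
        (Real.Gamma ((k : ℝ) + m + 1)) ^ 2) * x ^ (k + m) = cS k (k + m) * x ^ (k + m) := by
      intro m
      have g1 : Real.Gamma ((k : ℝ) + m + k) = (Nat.factorial (2 * k + m - 1) : ℝ) := by
        rw [show (k : ℝ) + m + k = ((2 * k + m : ℕ) : ℝ) by push_cast; ring]
        exact Gamma_cast_nat (by omega)
      have g2 : Real.Gamma ((m : ℝ) + 1) = (Nat.factorial m : ℝ) :=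
        Real.Gamma_nat_eq_factorial m
      have g3 : Real.Gamma ((k : ℝ) + m + 1) = (Nat.factorial (k + m) : ℝ) := by
        rw [show (k : ℝ) + m + 1 = ((k + m : ℕ) : ℝ) + 1 by push_cast; ring]
        exact Real.Gamma_nat_eq_factorial (k + m)
      rw [g1, g2, g3]
      have : cS k (k + m) = aC k m := by
        unfold cS
        rw [if_pos (by omega), Nat.add_sub_cancel_left]
      rw [this]
      unfold aC
      ring
    rw [tsum_congr hterm2]
    have hinj : Function.Injective (fun m : ℕ => k + m) := fun a b hab => by
      simpa using hab
    refine Function.Injective.tsum_eq hinj (f := fun n => cS k n * x ^ n) ?_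
    intro n hn
    rw [Function.mem_support] at hn
    have hkn : k ≤ n := by
      by_contra hc
      apply hn
      unfold cS
      rw [if_neg (by omega)]
      ring
    exact ⟨n - k, by simp; omega⟩
  rw [htsum]

/-! ### generic power series machinery for flat-bounded coefficients -/

section series

variable {c : ℕ → ℝ} {C : ℝ} {x : ℝ}

lemma tsum_shift {b : ℕ → ℝ} (hb : Summable b) (h0 : b 0 = 0) :
    ∑' n : ℕ, b n = ∑' n : ℕ, b (n + 1) := by
  rw [Summable.tsum_eq_zero_add hb, h0, zero_add]

lemma summable_flat (hc : ∀ n, |c n| ≤ C) (hx : |x| < 1)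
    (q : ℕ → ℝ) (j : ℕ → ℕ) (B : ℝ) (d : ℕ) (hq : ∀ n, |q n| ≤ B * ((n : ℝ) + 1) ^ d) :
    Summable (fun n : ℕ => q n * c (j n) * x ^ n) := by
  have hC : 0 ≤ C := le_trans (abs_nonneg _) (hc 0)
  apply summable_coeff_pow (C := C * B) (d := d) ?_ hx
  intro n
  rw [abs_mul]
  calc |q n| * |c (j n)| ≤ (B * ((n : ℝ) + 1) ^ d) * C :=
        mul_le_mul (hq n) (hc (j n)) (abs_nonneg _)
          (le_trans (abs_nonneg _) (hq n))
    _ = C * B * ((n : ℝ) + 1) ^ d := by ring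

lemma summ_T0 (hc : ∀ n, |c n| ≤ C) (hx : |x| < 1) : Summable (fun n : ℕ => c n * x ^ n) := by
  have := summable_flat hc hx (fun _ => 1) id 1 0 (fun n => by simp)
  apply this.congr; intro n; simp

lemma summ_T1 (hc : ∀ n, |c n| ≤ C) (hx : |x| < 1) :
    Summable (fun n : ℕ => ((n : ℝ) + 1) * c (n + 1) * x ^ n) :=
  summable_flat hc hx (fun n => (n : ℝ) + 1) (fun n => n + 1) 1 1
    (fun n => by rw [one_mul, pow_one, abs_of_nonneg (by positivity)])

lemma summ_T2 (hc : ∀ n, |c n| ≤ C) (hx : |x| < 1) :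
    Summable (fun n : ℕ => ((n : ℝ) + 1) * ((((n + 1 : ℕ) : ℝ)) + 1) * c (n + 2) * x ^ n) :=
  summable_flat hc hx (fun n => ((n : ℝ) + 1) * ((((n + 1 : ℕ) : ℝ)) + 1)) (fun n => n + 2) 2 2
    (fun n => by
      push_cast
      rw [abs_mul, abs_of_nonneg (by positivity : (0:ℝ) ≤ (n:ℝ)+1),
        abs_of_nonneg (by positivity : (0:ℝ) ≤ (n:ℝ)+1+1)]
      nlinarith [Nat.cast_nonneg (α := ℝ) n])

lemma summ_D1 (hc : ∀ n, |c n| ≤ C) (hx : |x| < 1) :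
    Summable (fun n : ℕ => (n : ℝ) * c n * x ^ n) :=
  summable_flat hc hx (fun n => (n : ℝ)) id 1 1
    (fun n => by rw [one_mul, pow_one, abs_of_nonneg (Nat.cast_nonneg n)]; linarith)

lemma summ_D2 (hc : ∀ n, |c n| ≤ C) (hx : |x| < 1) :
    Summable (fun n : ℕ => (n : ℝ) * ((n : ℝ) + 1) * c (n + 1) * x ^ n) :=
  summable_flat hc hx (fun n => (n : ℝ) * ((n : ℝ) + 1)) (fun n => n + 1) 1 2
    (fun n => by
      rw [one_mul, abs_mul, abs_of_nonneg (Nat.cast_nonneg n),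
        abs_of_nonneg (by positivity : (0:ℝ) ≤ (n:ℝ)+1)]
      nlinarith [Nat.cast_nonneg (α := ℝ) n])

lemma summ_D3 (hc : ∀ n, |c n| ≤ C) (hx : |x| < 1) :
    Summable (fun n : ℕ => (n : ℝ) * ((n : ℝ) - 1) * c n * x ^ n) :=
  summable_flat hc hx (fun n => (n : ℝ) * ((n : ℝ) - 1)) id 1 2
    (fun n => by
      rw [one_mul, abs_mul, abs_of_nonneg (Nat.cast_nonneg n)]
      have h1 : |((n : ℝ)) - 1| ≤ (n : ℝ) + 1 := by
        rw [abs_le]; constructor <;> linarith [Nat.cast_nonneg (α := ℝ) n]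
      nlinarith [Nat.cast_nonneg (α := ℝ) n, abs_nonneg ((n:ℝ) - 1)])

/-- `x·T1 = ∑ n cₙ xⁿ` -/
lemma mulx_T1 (hc : ∀ n, |c n| ≤ C) (hx : |x| < 1) :
    x * (∑' n : ℕ, ((n : ℝ) + 1) * c (n + 1) * x ^ n) = ∑' n : ℕ, (n : ℝ) * c n * x ^ n := by
  rw [← tsum_mul_left, tsum_shift (summ_D1 hc hx) (by simp)]
  apply tsum_congr
  intro n
  push_cast
  ring

/-- `x·T2 = ∑ n(n+1) c_{n+1} xⁿ` -/
lemma mulx_T2 (hc : ∀ n, |c n| ≤ C) (hx : |x| < 1) :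
    x * (∑' n : ℕ, ((n : ℝ) + 1) * ((((n + 1 : ℕ) : ℝ)) + 1) * c (n + 2) * x ^ n)
      = ∑' n : ℕ, (n : ℝ) * ((n : ℝ) + 1) * c (n + 1) * x ^ n := by
  rw [← tsum_mul_left, tsum_shift (summ_D2 hc hx) (by simp)]
  apply tsum_congr
  intro n
  push_cast
  ring

/-- `x²·T2 = ∑ n(n−1) cₙ xⁿ` -/
lemma mulx2_T2 (hc : ∀ n, |c n| ≤ C) (hx : |x| < 1) :
    x ^ 2 * (∑' n : ℕ, ((n : ℝ) + 1) * ((((n + 1 : ℕ) : ℝ)) + 1) * c (n + 2) * x ^ n)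
      = ∑' n : ℕ, (n : ℝ) * ((n : ℝ) - 1) * c n * x ^ n := by
  rw [← tsum_mul_left, tsum_shift (summ_D3 hc hx) (by simp),
    tsum_shift ((summable_nat_add_iff 1).2 (summ_D3 hc hx)) (by simp)]
  apply tsum_congr
  intro n
  push_cast
  ring

lemma ode_combine (hc : ∀ n, |c n| ≤ C) (hx : |x| < 1) (lam : ℝ) :
    x * (1 - x) * (∑' n : ℕ, ((n : ℝ) + 1) * ((((n + 1 : ℕ) : ℝ)) + 1) * c (n + 2) * x ^ n)
      + (1 - 2 * x) * (∑' n : ℕ, ((n : ℝ) + 1) * c (n + 1) * x ^ n)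
      + lam * (∑' n : ℕ, c n * x ^ n)
    = ∑' n : ℕ, (((n : ℝ) + 1) ^ 2 * c (n + 1)
        - ((n : ℝ) * ((n : ℝ) + 1) - lam) * c n) * x ^ n := by
  have e : x * (1 - x) * (∑' n : ℕ, ((n : ℝ) + 1) * ((((n + 1 : ℕ) : ℝ)) + 1) * c (n + 2) * x ^ n)
      + (1 - 2 * x) * (∑' n : ℕ, ((n : ℝ) + 1) * c (n + 1) * x ^ n)
      + lam * (∑' n : ℕ, c n * x ^ n)
    = (x * (∑' n : ℕ, ((n : ℝ) + 1) * ((((n + 1 : ℕ) : ℝ)) + 1) * c (n + 2) * x ^ n)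
       - x ^ 2 * (∑' n : ℕ, ((n : ℝ) + 1) * ((((n + 1 : ℕ) : ℝ)) + 1) * c (n + 2) * x ^ n))
      + ((∑' n : ℕ, ((n : ℝ) + 1) * c (n + 1) * x ^ n)
         - 2 * (x * (∑' n : ℕ, ((n : ℝ) + 1) * c (n + 1) * x ^ n)))
      + lam * (∑' n : ℕ, c n * x ^ n) := by ring
  rw [e, mulx_T1 hc hx, mulx_T2 hc hx, mulx2_T2 hc hx, ← tsum_mul_left (a := 2),
    ← tsum_mul_left (a := lam),
    ← Summable.tsum_sub (summ_D2 hc hx) (summ_D3 hc hx),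
    ← Summable.tsum_sub (summ_T1 hc hx) ((summ_D1 hc hx).mul_left 2),
    ← Summable.tsum_add ((summ_D2 hc hx).sub (summ_D3 hc hx))
      ((summ_T1 hc hx).sub ((summ_D1 hc hx).mul_left 2)),
    ← Summable.tsum_add (((summ_D2 hc hx).sub (summ_D3 hc hx)).add
      ((summ_T1 hc hx).sub ((summ_D1 hc hx).mul_left 2))) ((summ_T0 hc hx).mul_left lam)]
  apply tsum_congr
  intro n
  ring

end series

/-! ### specific coefficient sequences -/

lemma pS_bound (k n : ℕ) : |pS k n| ≤ CP k := by
  unfold pS CP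
  split
  · exact Finset.single_le_sum (f := fun m => |pC k m|) (fun m _ => abs_nonneg _)
      (mem_range.2 (by omega))
  · rw [abs_zero]; exact Finset.sum_nonneg fun m _ => abs_nonneg _

lemma rS_bound (k n : ℕ) : |rS k n| ≤ CR k := by
  unfold rS CR
  split
  · exact Finset.single_le_sum (f := fun m => |pC k m * dC k m|) (fun m _ => abs_nonneg _)
      (mem_range.2 (by omega))
  · rw [abs_zero]; exact Finset.sum_nonneg fun m _ => abs_nonneg _

lemma cS_flat {k : ℕ} (hk : 1 ≤ k) (n : ℕ) : |cS k n| ≤ aC k 0 := by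
  simpa using cS_bound k hk n

lemma tsum_sC (k : ℕ) (x : ℝ) :
    ∑' n : ℕ, sC k n * x ^ n = (k : ℝ) ^ 2 * aC k 0 * x ^ (k - 1) := by
  rw [tsum_eq_single (k - 1) (fun n hn => by unfold sC; rw [if_neg hn, zero_mul])]
  unfold sC
  rw [if_pos rfl]

lemma EP_zero {k : ℕ} (hk : 1 ≤ k) (n : ℕ) :
    ((n : ℝ) + 1) ^ 2 * pS k (n + 1)
      - ((n : ℝ) * ((n : ℝ) + 1) - ((k : ℝ) ^ 2 - k)) * pS k n = 0 := by
  unfold pS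
  rcases lt_trichotomy (n + 1) k with h | h | h
  · rw [if_pos h, if_pos (by omega)]
    linear_combination pC_rec h
  · rw [if_neg (by omega), if_pos (by omega)]
    have hK : (k : ℝ) = (n : ℝ) + 1 := by rw [← h]; push_cast; ring
    rw [hK]; ring
  · rw [if_neg (by omega), if_neg (by omega)]; ring

lemma ES_single {k : ℕ} (hk : 1 ≤ k) (n : ℕ) :
    ((n : ℝ) + 1) ^ 2 * cS k (n + 1)
      - ((n : ℝ) * ((n : ℝ) + 1) - ((k : ℝ) ^ 2 - k)) * cS k n = sC k n := by
  unfold cS sC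
  by_cases h1 : n + 1 < k
  · rw [if_neg (by omega), if_neg (by omega), if_neg (by omega)]; ring
  by_cases h2 : n + 1 = k
  · rw [if_pos (by omega), if_neg (by omega), if_pos (by omega)]
    have hsub : n + 1 - k = 0 := by omega
    rw [hsub]
    have hK : (k : ℝ) = (n : ℝ) + 1 := by rw [← h2]; push_cast; ring
    rw [hK]; ring
  · have hkn : k ≤ n := by omega
    rw [if_pos (by omega), if_pos hkn, if_neg (by omega)]
    obtain ⟨m, rfl⟩ := Nat.exists_eq_add_of_le hkn
    rw [show k + m + 1 - k = m + 1 from by omega, show k + m - k = m from by omega]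
    push_cast
    linear_combination aC_rec hk m

lemma pC_last {k : ℕ} (hk : 1 ≤ k) :
    (4 * (k : ℝ) - 2) * pC k (k - 1) + 2 * (-1 : ℝ) ^ k * (k : ℝ) ^ 2 * aC k 0 = 0 := by
  obtain ⟨j, rfl⟩ : ∃ j, k = j + 1 := ⟨k - 1, by omega⟩
  unfold pC aC
  rw [show j + 1 - 1 = j from rfl,
    show j + 1 + j - 1 = 2 * j from by omega,
    show j + 1 - j - 1 = 0 from by omega,
    show 2 * (j + 1) + 0 - 1 = 2 * j + 1 from by omega,
    show j + 1 + 0 = j + 1 from rfl,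
    Nat.factorial_succ (2 * j), Nat.factorial_succ j, pow_succ]
  have f1 : ((2 * j).factorial : ℝ) ≠ 0 := by positivity
  have f2 : (j.factorial : ℝ) ≠ 0 := by positivity
  push_cast
  field_simp
  ring

lemma FR_zero {k : ℕ} (hk : 1 ≤ k) (n : ℕ) :
    2 * pS k n - 4 * (((n : ℝ) + 1) * pS k (n + 1)) + 4 * ((n : ℝ) * pS k n)
      - 2 * (((n : ℝ) + 1) ^ 2 * rS k (n + 1)
          - ((n : ℝ) * ((n : ℝ) + 1) - ((k : ℝ) ^ 2 - k)) * rS k n)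
      + 2 * (-1 : ℝ) ^ k * sC k n = 0 := by
  unfold pS rS sC
  by_cases h1 : n + 1 < k
  · rw [if_pos (show n < k by omega), if_pos h1, if_pos h1, if_pos (show n < k by omega),
      if_neg (show ¬ n = k - 1 by omega)]
    have hδ := dC_rec h1
    have hnz1 : ((n : ℝ) + 1) ≠ 0 := by positivity
    have hnz2 : ((k : ℝ) + n) ≠ 0 := by
      have : (1 : ℝ) ≤ (k : ℝ) := by exact_mod_cast hk
      positivity
    have hnz3 : ((k : ℝ) - n - 1) ≠ 0 := by
      have : (n : ℝ) + 2 ≤ (k : ℝ) := by exact_mod_cast h1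
      intro hc; linarith
    have hp1 : pC k (n + 1) = ((n : ℝ) + k) * ((n : ℝ) - k + 1) * pC k n / ((n : ℝ) + 1) ^ 2 := by
      rw [eq_div_iff (by positivity)]
      linear_combination pC_rec h1
    rw [hδ, hp1]
    field_simp
    ring
  by_cases h2 : n + 1 = k
  · cases h2
    rw [if_pos (show n < n + 1 by omega), if_neg (show ¬ n + 1 < n + 1 by omega),
      if_neg (show ¬ n + 1 < n + 1 by omega), if_pos (show n < n + 1 by omega),
      if_pos (show n = n + 1 - 1 by omega)]
    have := pC_last (k := n + 1) (by omega)
    rw [show n + 1 - 1 = n from rfl] at this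
    push_cast at this ⊢
    linear_combination this
  · rw [if_neg (show ¬ n < k by omega), if_neg (show ¬ n + 1 < k by omega),
      if_neg (show ¬ n + 1 < k by omega), if_neg (show ¬ n < k by omega),
      if_neg (show ¬ n = k - 1 by omega)]
    ring

/-! ### derivatives of the series -/

section derivs
variable {c : ℕ → ℝ} {C : ℝ} {x : ℝ}

lemma hasDerivAt_T0 (hc : ∀ n, |c n| ≤ C) (hx : |x| < 1) :
    HasDerivAt (fun y : ℝ => ∑' n : ℕ, c n * y ^ n)
      (∑' n : ℕ, ((n : ℝ) + 1) * c (n + 1) * x ^ n) x :=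
  hasDerivAt_tsum_pow (C := C) (d := 0) (fun n => by simpa using hc n) hx

lemma hasDerivAt_T1 (hc : ∀ n, |c n| ≤ C) (hx : |x| < 1) :
    HasDerivAt (fun y : ℝ => ∑' n : ℕ, ((n : ℝ) + 1) * c (n + 1) * y ^ n)
      (∑' n : ℕ, ((n : ℝ) + 1) * ((((n + 1 : ℕ) : ℝ)) + 1) * c (n + 2) * x ^ n) x := by
  have hb : ∀ n : ℕ, |((n : ℝ) + 1) * c (n + 1)| ≤ C * ((n : ℝ) + 1) ^ 1 := by
    intro n
    rw [abs_mul, abs_of_nonneg (by positivity : (0:ℝ) ≤ (n : ℝ) + 1), pow_one, mul_comm C]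
    exact mul_le_mul_of_nonneg_left (hc (n + 1)) (by positivity)
  have h := hasDerivAt_tsum_pow (c := fun n => ((n : ℝ) + 1) * c (n + 1)) hb hx
  convert h using 1
  exact tsum_congr fun n => by simp only [mul_assoc]

end derivs

/-! ### the function `phi` and its derivatives -/

def phiD1 (k : ℕ) (x : ℝ) : ℝ :=
  -2 * x⁻¹ * Pf k x - 2 * Real.log x * Pf1 k x - 2 * Rf1 k x + 2 * (-1 : ℝ) ^ k * Sf1 k x

def phiD2 (k : ℕ) (x : ℝ) : ℝ :=
  2 * (x⁻¹ * x⁻¹) * Pf k x - 4 * x⁻¹ * Pf1 k x - 2 * Real.log x * Pf2 k x - 2 * Rf2 k x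
    + 2 * (-1 : ℝ) ^ k * Sf2 k x

lemma hasDerivAt_phi {k : ℕ} (hk : 1 ≤ k) {x : ℝ} (hx0 : 0 < x) (hx1 : x < 1) :
    HasDerivAt (phi k) (phiD1 k x) x := by
  have hxa : |x| < 1 := by rw [abs_of_pos hx0]; exact hx1
  have hfun : phi k = fun y : ℝ =>
      -2 * Real.log y * Pf k y - 2 * Rf k y + 2 * (-1 : ℝ) ^ k * Sf k y :=
    funext fun y => phi_eq hk y
  rw [hfun]
  have hP : HasDerivAt (Pf k) (Pf1 k x) x := hasDerivAt_T0 (pS_bound k) hxa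
  have hR : HasDerivAt (Rf k) (Rf1 k x) x := hasDerivAt_T0 (rS_bound k) hxa
  have hS : HasDerivAt (Sf k) (Sf1 k x) x := hasDerivAt_T0 (cS_flat hk) hxa
  have hlog : HasDerivAt (fun y : ℝ => -2 * Real.log y) (-2 * x⁻¹) x :=
    (Real.hasDerivAt_log hx0.ne').const_mul (-2)
  have h := ((hlog.mul hP).sub (hR.const_mul 2)).add (hS.const_mul (2 * (-1 : ℝ) ^ k))
  refine h.congr_deriv ?_
  unfold phiD1
  ring

lemma hasDerivAt_phiD1 {k : ℕ} (hk : 1 ≤ k) {x : ℝ} (hx0 : 0 < x) (hx1 : x < 1) :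
    HasDerivAt (phiD1 k) (phiD2 k x) x := by
  have hxa : |x| < 1 := by rw [abs_of_pos hx0]; exact hx1
  have hP : HasDerivAt (Pf k) (Pf1 k x) x := hasDerivAt_T0 (pS_bound k) hxa
  have hP1 : HasDerivAt (Pf1 k) (Pf2 k x) x := hasDerivAt_T1 (pS_bound k) hxa
  have hR1 : HasDerivAt (Rf1 k) (Rf2 k x) x := hasDerivAt_T1 (rS_bound k) hxa
  have hS1 : HasDerivAt (Sf1 k) (Sf2 k x) x := hasDerivAt_T1 (cS_flat hk) hxa
  have hinv : HasDerivAt (fun y : ℝ => -2 * y⁻¹) (-2 * -(x ^ 2)⁻¹) x :=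
    (hasDerivAt_inv hx0.ne').const_mul (-2)
  have hlog : HasDerivAt (fun y : ℝ => -2 * Real.log y) (-2 * x⁻¹) x :=
    (Real.hasDerivAt_log hx0.ne').const_mul (-2)
  have hlog2 : HasDerivAt (fun y : ℝ => 2 * Real.log y) (2 * x⁻¹) x :=
    (Real.hasDerivAt_log hx0.ne').const_mul 2
  have h := (((hinv.mul hP).sub (hlog2.mul hP1)).sub (hR1.const_mul 2)).add
      (hS1.const_mul (2 * (-1 : ℝ) ^ k))
  refine h.congr_deriv ?_
  unfold phiD2
  ring

/-! ### the hypergeometric-type ODE for `phi` -/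

lemma P_group {k : ℕ} (hk : 1 ≤ k) {x : ℝ} (hxa : |x| < 1) :
    x * (1 - x) * Pf2 k x + (1 - 2 * x) * Pf1 k x + ((k : ℝ) ^ 2 - k) * Pf k x = 0 := by
  unfold Pf Pf1 Pf2
  rw [ode_combine (pS_bound k) hxa,
    tsum_congr (f := fun n : ℕ => (((n : ℝ) + 1) ^ 2 * pS k (n + 1)
        - ((n : ℝ) * ((n : ℝ) + 1) - ((k : ℝ) ^ 2 - k)) * pS k n) * x ^ n)
      (g := fun _ => (0 : ℝ)) (fun n => by simp only [EP_zero hk n, zero_mul])]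
  exact tsum_zero

lemma S_group {k : ℕ} (hk : 1 ≤ k) {x : ℝ} (hxa : |x| < 1) :
    x * (1 - x) * Sf2 k x + (1 - 2 * x) * Sf1 k x + ((k : ℝ) ^ 2 - k) * Sf k x
      = (k : ℝ) ^ 2 * aC k 0 * x ^ (k - 1) := by
  unfold Sf Sf1 Sf2
  rw [ode_combine (cS_flat hk) hxa,
    tsum_congr (g := fun n : ℕ => sC k n * x ^ n)
      (fun n => by simp only [ES_single hk n]), tsum_sC]

set_option maxHeartbeats 1000000 in
lemma NL_group {k : ℕ} (hk : 1 ≤ k) {x : ℝ} (hxa : |x| < 1) :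
    2 * Pf k x - 4 * Pf1 k x + 4 * (x * Pf1 k x)
      - 2 * (x * (1 - x) * Rf2 k x + (1 - 2 * x) * Rf1 k x + ((k : ℝ) ^ 2 - k) * Rf k x)
      + 2 * (-1 : ℝ) ^ k * ((k : ℝ) ^ 2 * aC k 0 * x ^ (k - 1)) = 0 := by
  unfold Pf Pf1 Rf Rf1 Rf2
  rw [ode_combine (rS_bound k) hxa, mulx_T1 (pS_bound k) hxa, ← tsum_sC k x,
    ← tsum_mul_left (a := 2), ← tsum_mul_left (a := 4), ← tsum_mul_left (a := 4),
    ← tsum_mul_left (a := 2), ← tsum_mul_left (a := 2 * (-1 : ℝ) ^ k)]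
  have sA : Summable (fun n : ℕ => 2 * (pS k n * x ^ n)) :=
    (summ_T0 (pS_bound k) hxa).mul_left 2
  have sB : Summable (fun n : ℕ => 4 * (((n : ℝ) + 1) * pS k (n + 1) * x ^ n)) :=
    (summ_T1 (pS_bound k) hxa).mul_left 4
  have sCc : Summable (fun n : ℕ => 4 * ((n : ℝ) * pS k n * x ^ n)) :=
    (summ_D1 (pS_bound k) hxa).mul_left 4
  have sD : Summable (fun n : ℕ => 2 * ((((n : ℝ) + 1) ^ 2 * rS k (n + 1)
      - ((n : ℝ) * ((n : ℝ) + 1) - ((k : ℝ) ^ 2 - k)) * rS k n) * x ^ n)) := by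
    apply Summable.mul_left
    have hA : Summable (fun n : ℕ => ((n : ℝ) + 1) ^ 2 * rS k (n + 1) * x ^ n) :=
      summable_flat (rS_bound k) hxa (fun n => ((n : ℝ) + 1) ^ 2) (fun n => n + 1) 1 2
        (fun n => by rw [one_mul, abs_of_nonneg (by positivity)])
    have hB : Summable
        (fun n : ℕ => ((n : ℝ) * ((n : ℝ) + 1) - ((k : ℝ) ^ 2 - k)) * rS k n * x ^ n) := by
      apply summable_flat (rS_bound k) hxa
        (fun n => (n : ℝ) * ((n : ℝ) + 1) - ((k : ℝ) ^ 2 - k)) id ((k : ℝ) ^ 2 + k + 1) 2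
      intro n
      have hn0 : (0:ℝ) ≤ (n : ℝ) := Nat.cast_nonneg n
      have hk0 : (0:ℝ) ≤ (k : ℝ) := Nat.cast_nonneg k
      have h1 : |(n : ℝ) * ((n : ℝ) + 1)| ≤ ((n : ℝ) + 1) ^ 2 := by
        rw [abs_mul, abs_of_nonneg hn0,
          abs_of_nonneg (by positivity : (0:ℝ) ≤ (n : ℝ) + 1)]
        nlinarith
      have h2 : |((k : ℝ) ^ 2 - k)| ≤ (k : ℝ) ^ 2 + k := by
        rw [abs_le]; constructor <;> nlinarith
      have h3 : (1:ℝ) ≤ ((n : ℝ) + 1) ^ 2 := by nlinarith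
      calc |(n : ℝ) * ((n : ℝ) + 1) - ((k : ℝ) ^ 2 - k)|
          ≤ |(n : ℝ) * ((n : ℝ) + 1)| + |((k : ℝ) ^ 2 - k)| := abs_sub _ _
        _ ≤ ((n : ℝ) + 1) ^ 2 + ((k : ℝ) ^ 2 + k) * ((n : ℝ) + 1) ^ 2 := by
            nlinarith [abs_nonneg ((k : ℝ) ^ 2 - k)]
        _ = ((k : ℝ) ^ 2 + k + 1) * ((n : ℝ) + 1) ^ 2 := by ring
    exact (hA.sub hB).congr (fun n => by ring)
  have sE : Summable (fun n : ℕ => 2 * (-1 : ℝ) ^ k * (sC k n * x ^ n)) := by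
    apply Summable.mul_left
    apply summable_of_ne_finset_zero (s := {k - 1})
    intro n hn
    simp only [mem_singleton] at hn
    unfold sC
    rw [if_neg hn, zero_mul]
  rw [← Summable.tsum_sub sA sB, ← Summable.tsum_add (sA.sub sB) sCc, ← Summable.tsum_sub ((sA.sub sB).add sCc) sD,
    ← Summable.tsum_add (((sA.sub sB).add sCc).sub sD) sE]
  rw [tsum_congr (g := fun _ : ℕ => (0:ℝ)) (fun n => by
    linear_combination x ^ n * FR_zero hk n)]
  exact tsum_zero

lemma phi_ode {k : ℕ} (hk : 1 ≤ k) {x : ℝ} (hx0 : 0 < x) (hx1 : x < 1) :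
    x * (1 - x) * phiD2 k x + (1 - 2 * x) * phiD1 k x + ((k : ℝ) ^ 2 - k) * phi k x = 0 := by
  have hxa : |x| < 1 := by rw [abs_of_pos hx0]; exact hx1
  have hP := P_group hk hxa
  have hS := S_group hk hxa
  have hNL := NL_group hk hxa
  have hxne : x ≠ 0 := hx0.ne'
  have expand : x * (1 - x) * phiD2 k x + (1 - 2 * x) * phiD1 k x + ((k : ℝ) ^ 2 - k) * phi k x
      = -2 * Real.log x *
          (x * (1 - x) * Pf2 k x + (1 - 2 * x) * Pf1 k x + ((k : ℝ) ^ 2 - k) * Pf k x)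
        + (2 * Pf k x - 4 * Pf1 k x + 4 * (x * Pf1 k x)
            - 2 * (x * (1 - x) * Rf2 k x + (1 - 2 * x) * Rf1 k x + ((k : ℝ) ^ 2 - k) * Rf k x)
            + 2 * (-1 : ℝ) ^ k * ((k : ℝ) ^ 2 * aC k 0 * x ^ (k - 1)))
        - 2 * (-1 : ℝ) ^ k * ((k : ℝ) ^ 2 * aC k 0 * x ^ (k - 1))
        + 2 * (-1 : ℝ) ^ k *
          (x * (1 - x) * Sf2 k x + (1 - 2 * x) * Sf1 k x + ((k : ℝ) ^ 2 - k) * Sf k x) := by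
    rw [phi_eq hk]
    unfold phiD1 phiD2
    field_simp
    ring
  rw [expand, hP, hS, hNL]
  ring

/-! ### Stage A : `y(θ) = φ(sin²(θ/2))` satisfies the Legendre equation -/

def yf (k : ℕ) (θ : ℝ) : ℝ := phi k (Real.sin (θ / 2) ^ 2)
def yf1 (k : ℕ) (θ : ℝ) : ℝ :=
  phiD1 k (Real.sin (θ / 2) ^ 2) * (Real.sin (θ / 2) * Real.cos (θ / 2))
def yf2 (k : ℕ) (θ : ℝ) : ℝ :=
  phiD2 k (Real.sin (θ / 2) ^ 2) * (Real.sin (θ / 2) * Real.cos (θ / 2)) ^ 2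
    + phiD1 k (Real.sin (θ / 2) ^ 2) * ((Real.cos (θ / 2) ^ 2 - Real.sin (θ / 2) ^ 2) / 2)

section stageA

variable {k : ℕ} {θ : ℝ}

lemma sin_half_pos (h0 : 0 < θ) (h1 : θ < Real.pi) : 0 < Real.sin (θ / 2) :=
  Real.sin_pos_of_pos_of_lt_pi (by linarith) (by linarith [Real.pi_pos])

lemma cos_half_pos (h0 : 0 < θ) (h1 : θ < Real.pi) : 0 < Real.cos (θ / 2) :=
  Real.cos_pos_of_mem_Ioo ⟨by linarith [Real.pi_pos], by linarith⟩

lemma m_mem (h0 : 0 < θ) (h1 : θ < Real.pi) :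
    0 < Real.sin (θ / 2) ^ 2 ∧ Real.sin (θ / 2) ^ 2 < 1 := by
  have ha := sin_half_pos h0 h1
  have hb := cos_half_pos h0 h1
  have hpyth := Real.sin_sq_add_cos_sq (θ / 2)
  constructor
  · positivity
  · nlinarith

lemma hasDerivAt_m (θ : ℝ) :
    HasDerivAt (fun t : ℝ => Real.sin (t / 2) ^ 2)
      (Real.sin (θ / 2) * Real.cos (θ / 2)) θ := by
  have h2 : HasDerivAt (fun t : ℝ => t / 2) (1 / 2) θ := by
    simpa using (hasDerivAt_id θ).div_const 2
  have hs : HasDerivAt (fun t : ℝ => Real.sin (t / 2)) (Real.cos (θ / 2) * (1 / 2)) θ :=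
    by have := (Real.hasDerivAt_sin (θ / 2)).comp θ h2; exact this
  have := hs.pow 2
  refine this.congr_deriv ?_
  ring

lemma hasDerivAt_yf (hk : 1 ≤ k) (h0 : 0 < θ) (h1 : θ < Real.pi) :
    HasDerivAt (yf k) (yf1 k θ) θ := by
  obtain ⟨hm0, hm1⟩ := m_mem h0 h1
  have h := (hasDerivAt_phi hk hm0 hm1).comp θ (hasDerivAt_m θ)
  rw [Function.comp_def] at h
  exact h

lemma hasDerivAt_yf1 (hk : 1 ≤ k) (h0 : 0 < θ) (h1 : θ < Real.pi) :
    HasDerivAt (yf1 k) (yf2 k θ) θ := by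
  obtain ⟨hm0, hm1⟩ := m_mem h0 h1
  have hφ1 : HasDerivAt (fun t : ℝ => phiD1 k (Real.sin (t / 2) ^ 2))
      (phiD2 k (Real.sin (θ / 2) ^ 2) * (Real.sin (θ / 2) * Real.cos (θ / 2))) θ := by
    have h := (hasDerivAt_phiD1 hk hm0 hm1).comp θ (hasDerivAt_m θ)
    rw [Function.comp_def] at h
    exact h
  have h2 : HasDerivAt (fun t : ℝ => t / 2) (1 / 2) θ := by
    simpa using (hasDerivAt_id θ).div_const 2
  have hs : HasDerivAt (fun t : ℝ => Real.sin (t / 2)) (Real.cos (θ / 2) * (1 / 2)) θ :=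
    by have := (Real.hasDerivAt_sin (θ / 2)).comp θ h2; exact this
  have hc : HasDerivAt (fun t : ℝ => Real.cos (t / 2)) (-Real.sin (θ / 2) * (1 / 2)) θ :=
    by have := (Real.hasDerivAt_cos (θ / 2)).comp θ h2; exact this
  have h := hφ1.mul (hs.mul hc)
  simp only [Pi.mul_apply] at h
  refine h.congr_deriv ?_
  unfold yf2
  ring

lemma y_ode (hk : 1 ≤ k) (h0 : 0 < θ) (h1 : θ < Real.pi) :
    Real.sin θ * yf2 k θ + Real.cos θ * yf1 k θ
      + ((k : ℝ) ^ 2 - k) * Real.sin θ * yf k θ = 0 := by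
  obtain ⟨hm0, hm1⟩ := m_mem h0 h1
  have hode := phi_ode hk hm0 hm1
  have hsin : Real.sin θ = 2 * Real.sin (θ / 2) * Real.cos (θ / 2) := by
    rw [show θ = 2 * (θ / 2) by ring, Real.sin_two_mul]
    ring_nf
  have hcos : Real.cos θ = 2 * Real.cos (θ / 2) ^ 2 - 1 := by
    rw [show θ = 2 * (θ / 2) by ring, Real.cos_two_mul]
    ring_nf
  have hpyth : Real.sin (θ / 2) ^ 2 + Real.cos (θ / 2) ^ 2 = 1 :=
    Real.sin_sq_add_cos_sq (θ / 2)
  unfold yf yf1 yf2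
  rw [hsin, hcos]
  linear_combination (2 * Real.sin (θ / 2) * Real.cos (θ / 2)) * hode
    + (2 * Real.sin (θ / 2) ^ 3 * Real.cos (θ / 2) * phiD2 k (Real.sin (θ / 2) ^ 2)
        + 3 * Real.sin (θ / 2) * Real.cos (θ / 2) * phiD1 k (Real.sin (θ / 2) ^ 2)) * hpyth

end stageA

/-! ### Stage B : `v = √(sin θ)·y` -/

def vf (k : ℕ) (θ : ℝ) : ℝ := Real.sqrt (Real.sin θ) * yf k θ
def vf1 (k : ℕ) (θ : ℝ) : ℝ :=
  Real.cos θ / (2 * Real.sqrt (Real.sin θ)) * yf k θ + Real.sqrt (Real.sin θ) * yf1 k θ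
def vf2 (k : ℕ) (θ : ℝ) : ℝ :=
  (-Real.sin θ / (2 * Real.sqrt (Real.sin θ))
      - Real.cos θ ^ 2 / (4 * Real.sin θ * Real.sqrt (Real.sin θ))) * yf k θ
    + Real.cos θ / Real.sqrt (Real.sin θ) * yf1 k θ
    + Real.sqrt (Real.sin θ) * yf2 k θ

section stageB

variable {k : ℕ} {θ : ℝ}

lemma hasDerivAt_sqrt_sin (hs : 0 < Real.sin θ) :
    HasDerivAt (fun t : ℝ => Real.sqrt (Real.sin t))
      (Real.cos θ / (2 * Real.sqrt (Real.sin θ))) θ := by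
  have h := (Real.hasDerivAt_sqrt hs.ne').comp θ (Real.hasDerivAt_sin θ)
  rw [Function.comp_def] at h
  refine h.congr_deriv ?_
  ring

lemma hasDerivAt_vf (hk : 1 ≤ k) (h0 : 0 < θ) (h1 : θ < Real.pi) :
    HasDerivAt (vf k) (vf1 k θ) θ := by
  have hs : 0 < Real.sin θ := Real.sin_pos_of_pos_of_lt_pi h0 h1
  exact (hasDerivAt_sqrt_sin hs).mul (hasDerivAt_yf hk h0 h1)

lemma hasDerivAt_vf1 (hk : 1 ≤ k) (h0 : 0 < θ) (h1 : θ < Real.pi) :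
    HasDerivAt (vf1 k) (vf2 k θ) θ := by
  have hs : 0 < Real.sin θ := Real.sin_pos_of_pos_of_lt_pi h0 h1
  have hu : 0 < Real.sqrt (Real.sin θ) := Real.sqrt_pos.2 hs
  have hden : HasDerivAt (fun t : ℝ => 2 * Real.sqrt (Real.sin t))
      (2 * (Real.cos θ / (2 * Real.sqrt (Real.sin θ)))) θ :=
    (hasDerivAt_sqrt_sin hs).const_mul 2
  have hquot : HasDerivAt (fun t : ℝ => Real.cos t / (2 * Real.sqrt (Real.sin t)))
      ((-Real.sin θ * (2 * Real.sqrt (Real.sin θ))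
          - Real.cos θ * (2 * (Real.cos θ / (2 * Real.sqrt (Real.sin θ)))))
        / (2 * Real.sqrt (Real.sin θ)) ^ 2) θ :=
    (Real.hasDerivAt_cos θ).div hden (by positivity)
  have h := (hquot.mul (hasDerivAt_yf hk h0 h1)).add
    ((hasDerivAt_sqrt_sin hs).mul (hasDerivAt_yf1 hk h0 h1))
  refine h.congr_deriv ?_
  unfold vf2
  have hs2 : Real.sin θ = Real.sqrt (Real.sin θ) ^ 2 := (Real.sq_sqrt hs.le).symm
  set u := Real.sqrt (Real.sin θ) with hudef
  rw [hs2]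
  field_simp
  ring

lemma v_ode (hk : 1 ≤ k) (h0 : 0 < θ) (h1 : θ < Real.pi) :
    vf2 k θ + (((k : ℝ) - 1 / 2) ^ 2 + 1 / (4 * Real.sin θ ^ 2)) * vf k θ = 0 := by
  have hs : 0 < Real.sin θ := Real.sin_pos_of_pos_of_lt_pi h0 h1
  have hu : 0 < Real.sqrt (Real.sin θ) := Real.sqrt_pos.2 hs
  have hy2 : yf2 k θ = -((Real.cos θ * yf1 k θ
      + ((k : ℝ) ^ 2 - k) * Real.sin θ * yf k θ) / Real.sin θ) := by
    rw [← neg_div, eq_div_iff hs.ne']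
    linear_combination y_ode hk h0 h1
  have hpy : Real.cos θ ^ 2 = 1 - Real.sin θ ^ 2 := Real.cos_sq' θ
  unfold vf vf2
  rw [hy2, hpy]
  have hs2 : Real.sin θ = Real.sqrt (Real.sin θ) ^ 2 := (Real.sq_sqrt hs.le).symm
  set u := Real.sqrt (Real.sin θ) with hudef
  rw [hs2]
  field_simp
  ring

end stageB

/-! ### Stage C : Liouville–Green variable `ξ = θ²` -/

def Wf (k : ℕ) (ξ : ℝ) : ℝ := Real.sqrt (Real.sqrt ξ) * vf k (Real.sqrt ξ)
def Wf1 (k : ℕ) (ξ : ℝ) : ℝ :=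
  (2 * Real.sqrt (Real.sqrt ξ))⁻¹ * (2 * Real.sqrt ξ)⁻¹ * vf k (Real.sqrt ξ)
    + Real.sqrt (Real.sqrt ξ) * (vf1 k (Real.sqrt ξ) * (2 * Real.sqrt ξ)⁻¹)
def Wf2 (k : ℕ) (ξ : ℝ) : ℝ :=
  vf2 k (Real.sqrt ξ) / (4 * Real.sqrt (Real.sqrt ξ) ^ 3)
    - 3 * vf k (Real.sqrt ξ) / (16 * Real.sqrt (Real.sqrt ξ) ^ 7)

section stageC

variable {k : ℕ} {ξ : ℝ}

lemma theta_mem (h0 : 0 < ξ) (h1 : ξ < Real.pi ^ 2) :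
    0 < Real.sqrt ξ ∧ Real.sqrt ξ < Real.pi := by
  constructor
  · exact Real.sqrt_pos.2 h0
  · have := Real.sqrt_lt_sqrt h0.le h1
    rwa [Real.sqrt_sq Real.pi_pos.le] at this

lemma hasDerivAt_Wf (hk : 1 ≤ k) (h0 : 0 < ξ) (h1 : ξ < Real.pi ^ 2) :
    HasDerivAt (Wf k) (Wf1 k ξ) ξ := by
  obtain ⟨hθ0, hθ1⟩ := theta_mem h0 h1
  have hsq : HasDerivAt Real.sqrt (1 / (2 * Real.sqrt ξ)) ξ := Real.hasDerivAt_sqrt h0.ne'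
  have hssq : HasDerivAt (fun t : ℝ => Real.sqrt (Real.sqrt t))
      (1 / (2 * Real.sqrt (Real.sqrt ξ)) * (1 / (2 * Real.sqrt ξ))) ξ := by
    have h := (Real.hasDerivAt_sqrt hθ0.ne').comp ξ hsq
    rw [Function.comp_def] at h
    exact h
  have hvcomp : HasDerivAt (fun t : ℝ => vf k (Real.sqrt t))
      (vf1 k (Real.sqrt ξ) * (1 / (2 * Real.sqrt ξ))) ξ := by
    have h := (hasDerivAt_vf hk hθ0 hθ1).comp ξ hsq
    rw [Function.comp_def] at h
    exact h
  have h := hssq.mul hvcomp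
  refine h.congr_deriv ?_
  unfold Wf1
  ring

lemma hasDerivAt_Wf1 (hk : 1 ≤ k) (h0 : 0 < ξ) (h1 : ξ < Real.pi ^ 2) :
    HasDerivAt (Wf1 k) (Wf2 k ξ) ξ := by
  obtain ⟨hθ0, hθ1⟩ := theta_mem h0 h1
  have hσ0 : 0 < Real.sqrt (Real.sqrt ξ) := Real.sqrt_pos.2 hθ0
  have hsq : HasDerivAt Real.sqrt (1 / (2 * Real.sqrt ξ)) ξ := Real.hasDerivAt_sqrt h0.ne'
  have hssq : HasDerivAt (fun t : ℝ => Real.sqrt (Real.sqrt t))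
      (1 / (2 * Real.sqrt (Real.sqrt ξ)) * (1 / (2 * Real.sqrt ξ))) ξ := by
    have h := (Real.hasDerivAt_sqrt hθ0.ne').comp ξ hsq
    rw [Function.comp_def] at h
    exact h
  have hvcomp : HasDerivAt (fun t : ℝ => vf k (Real.sqrt t))
      (vf1 k (Real.sqrt ξ) * (1 / (2 * Real.sqrt ξ))) ξ := by
    have h := (hasDerivAt_vf hk hθ0 hθ1).comp ξ hsq
    rw [Function.comp_def] at h
    exact h
  have hv1comp : HasDerivAt (fun t : ℝ => vf1 k (Real.sqrt t))
      (vf2 k (Real.sqrt ξ) * (1 / (2 * Real.sqrt ξ))) ξ := by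
    have h := (hasDerivAt_vf1 hk hθ0 hθ1).comp ξ hsq
    rw [Function.comp_def] at h
    exact h
  have hA : HasDerivAt (fun t : ℝ => (2 * Real.sqrt (Real.sqrt t))⁻¹)
      (-(2 * (1 / (2 * Real.sqrt (Real.sqrt ξ)) * (1 / (2 * Real.sqrt ξ))))
        / (2 * Real.sqrt (Real.sqrt ξ)) ^ 2) ξ :=
    (hssq.const_mul 2).inv (by positivity)
  have hB : HasDerivAt (fun t : ℝ => (2 * Real.sqrt t)⁻¹)
      (-(2 * (1 / (2 * Real.sqrt ξ))) / (2 * Real.sqrt ξ) ^ 2) ξ :=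
    (hsq.const_mul 2).inv (by positivity)
  have h := ((hA.mul hB).mul hvcomp).add (hssq.mul (hv1comp.mul hB))
  simp only [Pi.mul_apply] at h
  refine h.congr_deriv ?_
  unfold Wf2
  have hτ2 : Real.sqrt ξ = Real.sqrt (Real.sqrt ξ) ^ 2 := (Real.sq_sqrt hθ0.le).symm
  set σ := Real.sqrt (Real.sqrt ξ) with hσdef
  rw [hτ2]
  field_simp
  ring

lemma W_ode (hk : 1 ≤ k) (h0 : 0 < ξ) (h1 : ξ < Real.pi ^ 2) :
    Wf2 k ξ + (((k : ℝ) - 1 / 2) ^ 2 / (4 * ξ) + 1 / (4 * ξ ^ 2)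
        + (1 / (16 * Real.sin (Real.sqrt ξ) ^ 2) - 1 / (16 * ξ)) / ξ) * Wf k ξ = 0 := by
  obtain ⟨hθ0, hθ1⟩ := theta_mem h0 h1
  have hσ0 : 0 < Real.sqrt (Real.sqrt ξ) := Real.sqrt_pos.2 hθ0
  have hsin : 0 < Real.sin (Real.sqrt ξ) := Real.sin_pos_of_pos_of_lt_pi hθ0 hθ1
  have hv2 : vf2 k (Real.sqrt ξ) = -((((k : ℝ) - 1 / 2) ^ 2
      + 1 / (4 * Real.sin (Real.sqrt ξ) ^ 2)) * vf k (Real.sqrt ξ)) := by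
    linear_combination v_ode hk hθ0 hθ1
  unfold Wf Wf2
  rw [hv2]
  have hξ4 : ξ = Real.sqrt (Real.sqrt ξ) ^ 4 := by
    have h2 : Real.sqrt ξ = Real.sqrt (Real.sqrt ξ) ^ 2 := (Real.sq_sqrt hθ0.le).symm
    have h3 : ξ = Real.sqrt ξ ^ 2 := (Real.sq_sqrt h0.le).symm
    nlinarith [h2, h3]
  set σ := Real.sqrt (Real.sqrt ξ) with hσdef
  set τ := Real.sqrt ξ with hτdef
  rw [hξ4]
  have hsne : Real.sin τ ≠ 0 := hsin.ne'
  field_simp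
  ring

end stageC

lemma rpow_quarter {t : ℝ} (ht : 0 ≤ t) :
    t ^ ((1 : ℝ) / 4) = Real.sqrt (Real.sqrt t) := by
  rw [Real.sqrt_eq_rpow, Real.sqrt_eq_rpow, ← Real.rpow_mul ht]
  norm_num

lemma F_eq_Wf {k : ℕ} {t : ℝ} (ht : 0 < t) :
    t ^ ((1 : ℝ) / 4) * Real.sqrt (Real.sin (Real.sqrt t)) *
      phi k (Real.sin (Real.sqrt t / 2) ^ 2) = Wf k t := by
  rw [rpow_quarter ht.le]
  unfold Wf vf yf
  ring

end LGaux

theorem liouville_green_phi_ode' (k : ℕ) (hk : 1 ≤ k) :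
    ∀ ξ ∈ Set.Ioo (0 : ℝ) (Real.pi ^ 2),
      DifferentiableAt ℝ
        (fun t => t ^ ((1 : ℝ) / 4) * Real.sqrt (Real.sin (Real.sqrt t)) *
          phi k (Real.sin (Real.sqrt t / 2) ^ 2)) ξ ∧
      DifferentiableAt ℝ
        (deriv (fun t => t ^ ((1 : ℝ) / 4) * Real.sqrt (Real.sin (Real.sqrt t)) *
          phi k (Real.sin (Real.sqrt t / 2) ^ 2))) ξ ∧
      deriv (deriv (fun t => t ^ ((1 : ℝ) / 4) * Real.sqrt (Real.sin (Real.sqrt t)) *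
          phi k (Real.sin (Real.sqrt t / 2) ^ 2))) ξ
        + (((k : ℝ) - 1 / 2) ^ 2 / (4 * ξ) + 1 / (4 * ξ ^ 2)
            + (1 / (16 * Real.sin (Real.sqrt ξ) ^ 2) - 1 / (16 * ξ)) / ξ)
          * (ξ ^ ((1 : ℝ) / 4) * Real.sqrt (Real.sin (Real.sqrt ξ)) *
              phi k (Real.sin (Real.sqrt ξ / 2) ^ 2)) = 0 := by
  intro ξ hξ
  obtain ⟨h0, h1⟩ := hξ
  have hEq : (fun t => t ^ ((1 : ℝ) / 4) * Real.sqrt (Real.sin (Real.sqrt t)) *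
      phi k (Real.sin (Real.sqrt t / 2) ^ 2)) =ᶠ[nhds ξ] LGaux.Wf k := by
    filter_upwards [Ioi_mem_nhds h0] with t ht
    exact LGaux.F_eq_Wf ht
  have hW1 : HasDerivAt (fun t => t ^ ((1 : ℝ) / 4) * Real.sqrt (Real.sin (Real.sqrt t)) *
      phi k (Real.sin (Real.sqrt t / 2) ^ 2)) (LGaux.Wf1 k ξ) ξ :=
    (LGaux.hasDerivAt_Wf hk h0 h1).congr_of_eventuallyEq hEq
  have hDF : deriv (fun t => t ^ ((1 : ℝ) / 4) * Real.sqrt (Real.sin (Real.sqrt t)) *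
      phi k (Real.sin (Real.sqrt t / 2) ^ 2)) =ᶠ[nhds ξ] LGaux.Wf1 k := by
    filter_upwards [isOpen_Ioo.mem_nhds (⟨h0, h1⟩ : ξ ∈ Set.Ioo (0:ℝ) (Real.pi ^ 2))] with t ht
    have hEqt : (fun t => t ^ ((1 : ℝ) / 4) * Real.sqrt (Real.sin (Real.sqrt t)) *
        phi k (Real.sin (Real.sqrt t / 2) ^ 2)) =ᶠ[nhds t] LGaux.Wf k := by
      filter_upwards [Ioi_mem_nhds ht.1] with u hu
      exact LGaux.F_eq_Wf hu
    exact ((LGaux.hasDerivAt_Wf hk ht.1 ht.2).congr_of_eventuallyEq hEqt).deriv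
  have hW2 : HasDerivAt (deriv (fun t => t ^ ((1 : ℝ) / 4) * Real.sqrt (Real.sin (Real.sqrt t)) *
      phi k (Real.sin (Real.sqrt t / 2) ^ 2))) (LGaux.Wf2 k ξ) ξ :=
    (LGaux.hasDerivAt_Wf1 hk h0 h1).congr_of_eventuallyEq hDF
  refine ⟨hW1.differentiableAt, hW2.differentiableAt, ?_⟩
  rw [hW2.deriv, LGaux.F_eq_Wf h0]
  exact LGaux.W_ode hk h0 h1


/-- `W(ξ) = ξ^{1/4}·(sin √ξ)^{1/2}·φ_k(sin²(√ξ/2))` is twice differentiable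
on `(0, π²)` and satisfies `W'' + (u²/(4ξ) + 1/(4ξ²) + ψ(ξ)/ξ)·W = 0` there, where
`u = k − 1/2` and `ψ(ξ) = 1/(16 sin²√ξ) − 1/(16ξ)`. -/
theorem liouville_green_phi_ode (k : ℕ) (hk : 1 ≤ k) :
    ∀ ξ ∈ Set.Ioo (0 : ℝ) (Real.pi ^ 2),
      DifferentiableAt ℝ
        (fun t => t ^ ((1 : ℝ) / 4) * Real.sqrt (Real.sin (Real.sqrt t)) *
          phi k (Real.sin (Real.sqrt t / 2) ^ 2)) ξ ∧
      DifferentiableAt ℝ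
        (deriv (fun t => t ^ ((1 : ℝ) / 4) * Real.sqrt (Real.sin (Real.sqrt t)) *
          phi k (Real.sin (Real.sqrt t / 2) ^ 2))) ξ ∧
      deriv (deriv (fun t => t ^ ((1 : ℝ) / 4) * Real.sqrt (Real.sin (Real.sqrt t)) *
          phi k (Real.sin (Real.sqrt t / 2) ^ 2))) ξ
        + (((k : ℝ) - 1 / 2) ^ 2 / (4 * ξ) + 1 / (4 * ξ ^ 2)
            + (1 / (16 * Real.sin (Real.sqrt ξ) ^ 2) - 1 / (16 * ξ)) / ξ)
          * (ξ ^ ((1 : ℝ) / 4) * Real.sqrt (Real.sin (Real.sqrt ξ)) *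
              phi k (Real.sin (Real.sqrt ξ / 2) ^ 2)) = 0 :=
  liouville_green_phi_ode' k hk

end
end

section
/- For every ξ ∈ (0, π²), the function x ↦ (1/(16 sin²√x) − 1/(16x)) · x^{−1/2} is integrable on (0, ξ) and ∫₀^ξ (1/(16 sin²√x) − 1/(16x)) · x^{−1/2} dx = (1/8)·(1/√ξ − cot √ξ). Equivalently, the first Liouville–Green coefficient B(0;ξ) = ξ^{−1/2} ∫₀^ξ (1/(16 sin²√x) − 1/(16x)) x^{−1/2} dx equals −(1/(8√ξ))·(cot √ξ − 1/√ξ). -/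
open MeasureTheory Real Set Filter

-- squeeze lemma: 1/t - cos t / sin t → 0 as t → 0⁺
lemma aux_tendsto_cot :
    Tendsto (fun t : ℝ => 1 / t - Real.cos t / Real.sin t) (nhdsWithin 0 (Set.Ioi 0)) (nhds 0) := by
  apply squeeze_zero_norm' (a := fun t : ℝ => t)
  · filter_upwards [Ioo_mem_nhdsGT_of_mem (by constructor <;> norm_num : (0:ℝ) ∈ Set.Ico 0 1)]
      with t ht
    obtain ⟨ht0, ht1⟩ := ht
    have hst : 0 < Real.sin t :=
      Real.sin_pos_of_pos_of_lt_pi ht0 (lt_of_lt_of_le ht1 (by linarith [Real.pi_gt_three]))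
    have h1 : t - t ^ 3 / 4 < Real.sin t := by
      have := Real.sin_gt_sub_cube ht0; linarith [pow_pos ht0 3]
    have h2 : Real.sin t < t := Real.sin_lt ht0
    have h3 : 1 - t ^ 2 / 2 ≤ Real.cos t := Real.one_sub_sq_div_two_le_cos
    have h4 : Real.cos t ≤ 1 := Real.cos_le_one t
    have key : 1 / t - Real.cos t / Real.sin t
        = (Real.sin t - t * Real.cos t) / (t * Real.sin t) := by
      field_simp
    rw [Real.norm_eq_abs, key, abs_div, abs_of_pos (mul_pos ht0 hst)]
    rw [div_le_iff₀ (mul_pos ht0 hst)]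
    rw [abs_le]
    have h6 : t ^ 3 ≤ t := by nlinarith
    have h8 : t / 2 ≤ Real.sin t := by nlinarith
    constructor
    · nlinarith [mul_le_mul_of_nonneg_left h8 (sq_nonneg t),
        mul_le_mul_of_nonneg_left h4 ht0.le]
    · nlinarith [mul_le_mul_of_nonneg_left h8 (sq_nonneg t),
        mul_le_mul_of_nonneg_left h3 ht0.le]
  · exact tendsto_id.mono_left nhdsWithin_le_nhds

/-- for `ξ ∈ (0, π²)`, the function
`x ↦ (1/(16 sin²√x) − 1/(16x))·x^{−1/2}` is integrable on `(0, ξ)` and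
`∫₀^ξ (1/(16 sin²√x) − 1/(16x))·x^{−1/2} dx = (1/8)(1/√ξ − cot √ξ)`;
equivalently the first Liouville–Green coefficient
`B(0;ξ) = ξ^{−1/2} ∫₀^ξ (…) dx` equals `−(1/(8√ξ))(cot √ξ − 1/√ξ)`. -/
theorem liouville_green_B0_trig (ξ : ℝ) (hξ : ξ ∈ Set.Ioo (0 : ℝ) (Real.pi ^ 2)) :
    IntegrableOn
      (fun x => (1 / (16 * Real.sin (Real.sqrt x) ^ 2) - 1 / (16 * x)) * x ^ (-(1 : ℝ) / 2))
      (Set.Ioo 0 ξ) ∧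
    ∫ x in Set.Ioo (0 : ℝ) ξ,
        (1 / (16 * Real.sin (Real.sqrt x) ^ 2) - 1 / (16 * x)) * x ^ (-(1 : ℝ) / 2)
      = (1 / 8) * (1 / Real.sqrt ξ - Real.cot (Real.sqrt ξ)) ∧
    ξ ^ (-(1 : ℝ) / 2) * ∫ x in Set.Ioo (0 : ℝ) ξ,
        (1 / (16 * Real.sin (Real.sqrt x) ^ 2) - 1 / (16 * x)) * x ^ (-(1 : ℝ) / 2)
      = -(1 / (8 * Real.sqrt ξ)) * (Real.cot (Real.sqrt ξ) - 1 / Real.sqrt ξ) := by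
  obtain ⟨hξ0, hξπ⟩ := hξ
  set s := Real.sqrt ξ with hs_def
  have hs0 : 0 < s := Real.sqrt_pos.mpr hξ0
  have hsπ : s < Real.pi := by
    have := Real.sqrt_lt_sqrt hξ0.le hξπ
    rwa [Real.sqrt_sq Real.pi_pos.le] at this
  have hsq : s ^ 2 = ξ := Real.sq_sqrt hξ0.le
  set f : ℝ → ℝ := fun x =>
    (1 / (16 * Real.sin (Real.sqrt x) ^ 2) - 1 / (16 * x)) * x ^ (-(1 : ℝ) / 2) with hf_def
  set g : ℝ → ℝ := fun t => (1 / (16 * Real.sin t ^ 2) - 1 / (16 * t ^ 2)) * 2 with hg_def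
  set F : ℝ → ℝ := fun t => (1 / 8) * (1 / t - Real.cos t / Real.sin t) with hF_def
  -- change of variables data
  have hmeas : MeasurableSet (Set.Ioo (0:ℝ) s) := measurableSet_Ioo
  have hφderiv : ∀ t ∈ Set.Ioo (0:ℝ) s,
      HasDerivWithinAt (fun t : ℝ => t ^ 2) (2 * t) (Set.Ioo (0:ℝ) s) t := by
    intro t _
    simpa using (hasDerivAt_pow 2 t).hasDerivWithinAt
  have hinj : Set.InjOn (fun t : ℝ => t ^ 2) (Set.Ioo (0:ℝ) s) := by
    intro a ha b hb h
    have h2 : a ^ 2 = b ^ 2 := h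
    have : Real.sqrt (a ^ 2) = Real.sqrt (b ^ 2) := by rw [h2]
    rwa [Real.sqrt_sq ha.1.le, Real.sqrt_sq hb.1.le] at this
  have himg : (fun t : ℝ => t ^ 2) '' Set.Ioo (0:ℝ) s = Set.Ioo 0 ξ := by
    ext x
    constructor
    · rintro ⟨t, ⟨ht0, hts⟩, rfl⟩
      exact ⟨by positivity, by rw [← hsq]; exact pow_lt_pow_left₀ hts ht0.le (by norm_num)⟩
    · rintro ⟨hx0, hxξ⟩
      refine ⟨Real.sqrt x, ⟨Real.sqrt_pos.mpr hx0, Real.sqrt_lt_sqrt hx0.le hxξ⟩,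
        Real.sq_sqrt hx0.le⟩
  have hpt : ∀ t ∈ Set.Ioo (0:ℝ) s, |2 * t| • f (t ^ 2) = g t := by
    intro t ht
    have ht0 := ht.1
    have hst : 0 < Real.sin t := Real.sin_pos_of_pos_of_lt_pi ht0 (ht.2.trans hsπ)
    have h1 : Real.sqrt (t ^ 2) = t := Real.sqrt_sq ht0.le
    have h2 : (t ^ 2 : ℝ) ^ (-(1:ℝ) / 2) = t⁻¹ := by
      rw [neg_div, Real.rpow_neg (sq_nonneg t), ← Real.sqrt_eq_rpow, h1]
    simp only [hf_def, hg_def, smul_eq_mul, h1, h2, abs_of_pos (by linarith : (0:ℝ) < 2 * t)]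
    field_simp
  -- derivative of F
  have hFderiv : ∀ t ∈ Set.Ioo (0:ℝ) s, HasDerivAt F (g t) t := by
    intro t ht
    have ht0 := ht.1
    have hst : 0 < Real.sin t := Real.sin_pos_of_pos_of_lt_pi ht0 (ht.2.trans hsπ)
    have hd1 : HasDerivAt (fun t : ℝ => 1 / t) (-(1 / t ^ 2)) t := by
      simpa using (hasDerivAt_inv ht0.ne').const_mul (1:ℝ) |>.congr_deriv (by ring)
    have hd2 : HasDerivAt (fun t : ℝ => Real.cos t / Real.sin t)
        ((-Real.sin t * Real.sin t - Real.cos t * Real.cos t) / Real.sin t ^ 2) t :=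
      (Real.hasDerivAt_cos t).div (Real.hasDerivAt_sin t) hst.ne'
    have := ((hd1.sub hd2).const_mul (1/8 : ℝ))
    refine HasDerivAt.congr_deriv this ?_
    have h5 : -Real.sin t * Real.sin t - Real.cos t * Real.cos t = -1 := by
      nlinarith [Real.sin_sq_add_cos_sq t]
    rw [hg_def, h5]
    field_simp
    ring
  -- continuity of F on Icc 0 s
  have hFcont : ContinuousOn F (Set.Icc 0 s) := by
    intro t ht
    rcases eq_or_lt_of_le ht.1 with h0 | h0
    · subst h0
      have hF0 : F 0 = 0 := by simp [hF_def]
      have : ContinuousWithinAt F (Set.Ioi 0) 0 := by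
        unfold ContinuousWithinAt
        rw [hF0]
        have := aux_tendsto_cot.const_mul (1/8 : ℝ)
        simpa [hF_def] using this
      exact (continuousWithinAt_Ioi_iff_Ici.mp this).mono Set.Icc_subset_Ici_self
    · have hst : 0 < Real.sin t :=
        Real.sin_pos_of_pos_of_lt_pi h0 (lt_of_le_of_lt ht.2 hsπ)
      have : ContinuousAt F t := by
        apply ContinuousAt.mul continuousAt_const
        exact (continuousAt_const.div continuousAt_id h0.ne').sub
          (Real.continuous_cos.continuousAt.div Real.continuous_sin.continuousAt hst.ne')
      exact this.continuousWithinAt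
  -- nonnegativity of g
  have hgpos : ∀ t ∈ Set.Ioo (0:ℝ) s, 0 ≤ g t := by
    intro t ht
    have ht0 := ht.1
    have hst : 0 < Real.sin t := Real.sin_pos_of_pos_of_lt_pi ht0 (ht.2.trans hsπ)
    have hle : Real.sin t ≤ t := Real.sin_le ht0.le
    have : Real.sin t ^ 2 ≤ t ^ 2 := by nlinarith
    have h1 : 1 / (16 * t ^ 2) ≤ 1 / (16 * Real.sin t ^ 2) := by
      apply one_div_le_one_div_of_le (by positivity)
      nlinarith
    simp only [hg_def]
    nlinarith
  -- integrability of g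
  have hgint : IntegrableOn g (Set.Ioc (0:ℝ) s) :=
    intervalIntegral.integrableOn_deriv_of_nonneg hFcont hFderiv hgpos
  have hgintIoo : IntegrableOn g (Set.Ioo (0:ℝ) s) := hgint.mono_set Set.Ioo_subset_Ioc_self
  -- value of the g-integral
  have hgval : ∫ t in Set.Ioo (0:ℝ) s, g t = (1/8) * (1 / s - Real.cot s) := by
    rw [← MeasureTheory.integral_Ioc_eq_integral_Ioo,
      ← intervalIntegral.integral_of_le hs0.le]
    rw [intervalIntegral.integral_eq_sub_of_hasDeriv_right_of_le hs0.le hFcont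
      (fun t ht => (hFderiv t ht).hasDerivWithinAt)
      ((intervalIntegrable_iff_integrableOn_Ioc_of_le hs0.le).mpr hgint)]
    have hF0 : F 0 = 0 := by simp [hF_def]
    rw [hF0, hF_def, Real.cot_eq_cos_div_sin, sub_zero]
  -- integrability of f
  have hfint : IntegrableOn f (Set.Ioo 0 ξ) := by
    rw [← himg,
      integrableOn_image_iff_integrableOn_abs_deriv_smul hmeas hφderiv hinj f]
    exact hgintIoo.congr_fun (fun t ht => (hpt t ht).symm ▸ rfl) measurableSet_Ioo
      |>.congr_fun (fun t ht => rfl) measurableSet_Ioo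
  -- value of the f-integral
  have hfval : ∫ x in Set.Ioo (0:ℝ) ξ, f x = (1/8) * (1 / s - Real.cot s) := by
    rw [← himg, integral_image_eq_integral_abs_deriv_smul hmeas hφderiv hinj f]
    rw [← hgval]
    exact setIntegral_congr_fun measurableSet_Ioo hpt
  refine ⟨hfint, hfval, ?_⟩
  rw [hfval]
  have hξrpow : ξ ^ (-(1:ℝ) / 2) = s⁻¹ := by
    rw [neg_div, Real.rpow_neg hξ0.le, ← Real.sqrt_eq_rpow]
  rw [hξrpow]
  ring
end

section
/- For every ξ > 0, the function x ↦ (1/(16x) − 1/(16 sinh²√x)) · x^{−1/2} is integrable on (0, ξ) and ∫₀^ξ (1/(16x) − 1/(16 sinh²√x)) · x^{−1/2} dx = (1/8)·(coth √ξ − 1/√ξ). Equivalently, the first Liouville–Green coefficient B(0;ξ) = ξ^{−1/2} ∫₀^ξ (1/(16x) − 1/(16 sinh²√x)) x^{−1/2} dx equals (1/8)·(coth √ξ /√ξ − 1/ξ). -/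
open MeasureTheory Real Set

-- sinh t ≤ t * cosh t for t ≥ 0
lemma aux_sinh_le (t : ℝ) (ht : 0 ≤ t) : Real.sinh t ≤ t * Real.cosh t := by
  have h : MonotoneOn (fun u : ℝ => u * Real.cosh u - Real.sinh u) (Set.Ici 0) := by
    apply monotoneOn_of_deriv_nonneg (convex_Ici 0)
    · exact ((continuous_id.mul Real.continuous_cosh).sub Real.continuous_sinh).continuousOn
    · intro u hu
      exact (((hasDerivAt_id u).mul (Real.hasDerivAt_cosh u)).sub
        (Real.hasDerivAt_sinh u)).differentiableAt.differentiableWithinAt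
    · intro u hu
      rw [interior_Ici, Set.mem_Ioi] at hu
      have hD : HasDerivAt (fun u : ℝ => u * Real.cosh u - Real.sinh u) (u * Real.sinh u) u := by
        have := ((hasDerivAt_id u).mul (Real.hasDerivAt_cosh u)).sub (Real.hasDerivAt_sinh u)
        exact this.congr_deriv (by simp only [id]; ring)
      rw [hD.deriv]
      positivity
  have := h (Set.self_mem_Ici) (Set.mem_Ici.2 ht) ht
  simpa using this

-- cosh t ≤ 1 + t * sinh t for t ≥ 0
lemma aux_cosh_le (t : ℝ) (ht : 0 ≤ t) : Real.cosh t ≤ 1 + t * Real.sinh t := by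
  have h : MonotoneOn (fun u : ℝ => 1 + u * Real.sinh u - Real.cosh u) (Set.Ici 0) := by
    apply monotoneOn_of_deriv_nonneg (convex_Ici 0)
    · exact ((continuous_const.add (continuous_id.mul Real.continuous_sinh)).sub
        Real.continuous_cosh).continuousOn
    · intro u hu
      exact (((hasDerivAt_const u (1:ℝ)).add ((hasDerivAt_id u).mul
        (Real.hasDerivAt_sinh u))).sub (Real.hasDerivAt_cosh u)).differentiableAt.differentiableWithinAt
    · intro u hu
      rw [interior_Ici, Set.mem_Ioi] at hu
      have hD : HasDerivAt (fun u : ℝ => 1 + u * Real.sinh u - Real.cosh u) (u * Real.cosh u) u := by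
        have := ((hasDerivAt_const u (1:ℝ)).add ((hasDerivAt_id u).mul
          (Real.hasDerivAt_sinh u))).sub (Real.hasDerivAt_cosh u)
        exact this.congr_deriv (by simp only [id]; ring)
      rw [hD.deriv]
      have := Real.cosh_pos (x := u)
      positivity
  have := h (Set.self_mem_Ici) (Set.mem_Ici.2 ht) ht
  simpa using this

lemma aux_coth_bound (t : ℝ) (ht : 0 < t) :
    0 ≤ Real.cosh t / Real.sinh t - 1 / t ∧ Real.cosh t / Real.sinh t - 1 / t ≤ t := by
  have hs : 0 < Real.sinh t := Real.sinh_pos_iff.2 ht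
  have key : Real.cosh t / Real.sinh t - 1 / t = (t * Real.cosh t - Real.sinh t) / (t * Real.sinh t) := by
    field_simp
  constructor
  · rw [key]
    apply div_nonneg _ (by positivity)
    linarith [aux_sinh_le t ht.le]
  · rw [key, div_le_iff₀ (by positivity)]
    have h1 := aux_cosh_le t ht.le
    have h2 : t ≤ Real.sinh t := Real.self_le_sinh_iff.2 ht.le
    nlinarith

lemma aux_rpow (x : ℝ) (hx : 0 < x) : x ^ (-(1 : ℝ) / 2) = (Real.sqrt x)⁻¹ := by
  rw [neg_div, Real.rpow_neg hx.le, ← Real.sqrt_eq_rpow]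

/-- for `ξ > 0`, the function
`x ↦ (1/(16x) − 1/(16 sinh²√x))·x^{−1/2}` is integrable on `(0, ξ)` and
`∫₀^ξ (1/(16x) − 1/(16 sinh²√x))·x^{−1/2} dx = (1/8)(coth √ξ − 1/√ξ)`;
equivalently the first Liouville–Green coefficient
`B(0;ξ) = ξ^{−1/2} ∫₀^ξ (…) dx` equals `(1/8)(coth √ξ/√ξ − 1/ξ)`.
Here the hyperbolic cotangent is written as `cosh/sinh`. -/
theorem liouville_green_B0_hyperbolic (ξ : ℝ) (hξ : 0 < ξ) :
    IntegrableOn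
      (fun x => (1 / (16 * x) - 1 / (16 * Real.sinh (Real.sqrt x) ^ 2)) * x ^ (-(1 : ℝ) / 2))
      (Set.Ioo 0 ξ) ∧
    ∫ x in Set.Ioo (0 : ℝ) ξ,
        (1 / (16 * x) - 1 / (16 * Real.sinh (Real.sqrt x) ^ 2)) * x ^ (-(1 : ℝ) / 2)
      = (1 / 8) * (Real.cosh (Real.sqrt ξ) / Real.sinh (Real.sqrt ξ) - 1 / Real.sqrt ξ) ∧
    ξ ^ (-(1 : ℝ) / 2) * ∫ x in Set.Ioo (0 : ℝ) ξ,
        (1 / (16 * x) - 1 / (16 * Real.sinh (Real.sqrt x) ^ 2)) * x ^ (-(1 : ℝ) / 2)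
      = (1 / 8) * (Real.cosh (Real.sqrt ξ) / Real.sinh (Real.sqrt ξ) / Real.sqrt ξ - 1 / ξ) := by
  set f : ℝ → ℝ := fun x => (1 / (16 * x) - 1 / (16 * Real.sinh (Real.sqrt x) ^ 2)) * x ^ (-(1 : ℝ) / 2) with hf
  set G : ℝ → ℝ := fun x => (1 / 8) * (Real.cosh (Real.sqrt x) / Real.sinh (Real.sqrt x) - 1 / Real.sqrt x) with hG
  have hG0 : G 0 = 0 := by simp [hG]
  -- derivative
  have hderiv : ∀ x ∈ Set.Ioo (0:ℝ) ξ, HasDerivAt G (f x) x := by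
    intro x hx
    have hx0 : 0 < x := hx.1
    set t := Real.sqrt x with htdef
    have ht : 0 < t := Real.sqrt_pos.2 hx0
    have hs : Real.sinh t ≠ 0 := ne_of_gt (Real.sinh_pos_iff.2 ht)
    have hsq : HasDerivAt Real.sqrt (1 / (2 * t)) x := Real.hasDerivAt_sqrt hx0.ne'
    have h1 : HasDerivAt (fun u => Real.cosh u / Real.sinh u)
        ((Real.sinh t * Real.sinh t - Real.cosh t * Real.cosh t) / Real.sinh t ^ 2) t :=
      (Real.hasDerivAt_cosh t).div (Real.hasDerivAt_sinh t) hs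
    have h2 : HasDerivAt (fun u : ℝ => 1 / u) (-(1 / t ^ 2)) t := by
      simpa [one_div] using hasDerivAt_inv ht.ne'
    have H1 : HasDerivAt (fun x => Real.cosh (Real.sqrt x) / Real.sinh (Real.sqrt x))
        ((Real.sinh t * Real.sinh t - Real.cosh t * Real.cosh t) / Real.sinh t ^ 2 * (1 / (2 * t))) x :=
      h1.comp x hsq
    have H2 : HasDerivAt (fun x => 1 / Real.sqrt x) (-(1 / t ^ 2) * (1 / (2 * t))) x :=
      h2.comp x hsq
    have HG := ((H1.sub H2).const_mul (1/8 : ℝ))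
    refine HG.congr_deriv (Eq.symm ?_)
    have hx2 : t * t = x := Real.mul_self_sqrt hx0.le
    have hc : Real.cosh t ^ 2 = Real.sinh t ^ 2 + 1 := by
      have := Real.cosh_sq_sub_sinh_sq t; linarith
    rw [hf]
    simp only
    rw [aux_rpow x hx0, ← htdef, ← hx2]
    field_simp
    linear_combination (16 * t ^ 2) * hc
  -- nonnegativity
  have hnonneg : ∀ x ∈ Set.Ioo (0:ℝ) ξ, 0 ≤ f x := by
    intro x hx
    have hx0 : 0 < x := hx.1
    have ht : 0 < Real.sqrt x := Real.sqrt_pos.2 hx0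
    have h1 : Real.sqrt x ≤ Real.sinh (Real.sqrt x) := Real.self_le_sinh_iff.2 ht.le
    have h2 : x ≤ Real.sinh (Real.sqrt x) ^ 2 := by
      have := Real.sq_sqrt hx0.le
      nlinarith
    apply mul_nonneg
    · have : 1 / (16 * Real.sinh (Real.sqrt x) ^ 2) ≤ 1 / (16 * x) := by
        apply one_div_le_one_div_of_le (by positivity)
        nlinarith
      linarith
    · positivity
  -- continuity on Icc
  have hcont : ContinuousOn G (Set.Icc 0 ξ) := by
    intro x hx
    rcases eq_or_lt_of_le hx.1 with h0 | h0
    · -- x = 0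
      subst h0
      rw [ContinuousWithinAt, hG0]
      have hup : Filter.Tendsto (fun y => (1/8 : ℝ) * Real.sqrt y) (nhdsWithin 0 (Set.Icc 0 ξ)) (nhds 0) := by
        have : Filter.Tendsto (fun y => (1/8 : ℝ) * Real.sqrt y) (nhds 0) (nhds ((1/8 : ℝ) * Real.sqrt 0)) :=
          (continuous_const.mul Real.continuous_sqrt).tendsto 0
        simpa using this.mono_left nhdsWithin_le_nhds
      refine tendsto_of_tendsto_of_tendsto_of_le_of_le' tendsto_const_nhds hup ?_ ?_
      · filter_upwards [self_mem_nhdsWithin] with y hy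
        rcases eq_or_lt_of_le hy.1 with h | h
        · simp [hG, ← h]
        · have ht : 0 < Real.sqrt y := Real.sqrt_pos.2 h
          have := (aux_coth_bound (Real.sqrt y) ht).1
          simp only [hG]
          nlinarith
      · filter_upwards [self_mem_nhdsWithin] with y hy
        rcases eq_or_lt_of_le hy.1 with h | h
        · simp [hG, ← h]
        · have ht : 0 < Real.sqrt y := Real.sqrt_pos.2 h
          have := (aux_coth_bound (Real.sqrt y) ht).2
          simp only [hG]
          nlinarith
    · -- x > 0
      have ht : 0 < Real.sqrt x := Real.sqrt_pos.2 h0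
      have hs : Real.sinh (Real.sqrt x) ≠ 0 := ne_of_gt (Real.sinh_pos_iff.2 ht)
      apply ContinuousAt.continuousWithinAt
      apply ContinuousAt.mul continuousAt_const
      apply ContinuousAt.sub
      · exact ContinuousAt.div (Real.continuous_cosh.comp Real.continuous_sqrt).continuousAt
          (Real.continuous_sinh.comp Real.continuous_sqrt).continuousAt hs
      · exact ContinuousAt.div continuousAt_const Real.continuous_sqrt.continuousAt ht.ne'
  -- integrability
  have hIoc : IntegrableOn f (Set.Ioc 0 ξ) :=
    intervalIntegral.integrableOn_deriv_of_nonneg hcont hderiv hnonneg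
  have hIoo : IntegrableOn f (Set.Ioo 0 ξ) := hIoc.mono_set Set.Ioo_subset_Ioc_self
  -- FTC
  have heq : ∫ x in (0:ℝ)..ξ, f x = G ξ - G 0 :=
    intervalIntegral.integral_eq_sub_of_hasDeriv_right_of_le hξ.le hcont
      (fun x hx => (hderiv x hx).hasDerivWithinAt)
      ((intervalIntegrable_iff_integrableOn_Ioc_of_le hξ.le).2 hIoc)
  have hval : ∫ x in Set.Ioo (0:ℝ) ξ, f x
      = (1 / 8) * (Real.cosh (Real.sqrt ξ) / Real.sinh (Real.sqrt ξ) - 1 / Real.sqrt ξ) := by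
    rw [← integral_Ioc_eq_integral_Ioo, ← intervalIntegral.integral_of_le hξ.le, heq, hG0, sub_zero]
  refine ⟨hIoo, hval, ?_⟩
  rw [hval, aux_rpow ξ hξ]
  have ht : 0 < Real.sqrt ξ := Real.sqrt_pos.2 hξ
  have h2 : Real.sqrt ξ * Real.sqrt ξ = ξ := Real.mul_self_sqrt hξ.le
  field_simp
  linear_combination (Real.sinh (Real.sqrt ξ)) * h2
end

section
/- For every complex s with Re s > 0, the series Σ_{m=1}^{∞} μ(m)/(ρ(m)·m^{1+s}) converges absolutely, the infinite product α(s) = Π_p (1 + 1/p − p^{−s−1}) / ((1 + 1/p)(1 − p^{−s−1})) over all primes p converges, and Σ_{m=1}^{∞} μ(m)/(ρ(m)·m^{1+s}) = α(s)/ζ(s+1). Moreover α(0) = ζ(2). -/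
/-!
Write `f(n) = μ(n) / (ρ(n) n^{1+s})`. Since `ρ ≥ 1` and `|μ| ≤ 1`, `f` is dominated by the
terms of `ζ(1 + Re s)`, so the series converges absolutely. As `μ` and `ρ` are multiplicative and
`μ` vanishes on prime powers `p^e` with `e ≥ 2`, the series has the Euler product
`Π_p (1 + f(p))`, and `1 + f(p) = (1 + 1/p - p^{-s-1}) / (1 + 1/p)`. Multiplying by the Euler
product `ζ(s+1) = Π_p (1 - p^{-s-1})⁻¹` gives `α(s)`. At `s = 0` the numerator of each factor of
`α` is `1`, leaving the Euler factor `(1 - p^{-2})⁻¹` of `ζ(2)`.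
-/

noncomputable section

open Finset

/-- `ρ(m) = Π_{p ∣ m} (1 + 1/p)`, the product over the prime divisors of `m`. -/
def rho (m : ℕ) : ℝ := ∏ p ∈ m.primeFactors, (1 + 1 / (p : ℝ))

lemma one_le_rho (m : ℕ) : 1 ≤ rho m :=
  one_le_prod fun p _ => le_add_of_nonneg_right (by positivity)

lemma rho_pos (m : ℕ) : 0 < rho m := zero_lt_one.trans_le (one_le_rho m)

lemma rho_mul_of_coprime {m n : ℕ} (hm : m ≠ 0) (hn : n ≠ 0) (h : m.Coprime n) :
    rho (m * n) = rho m * rho n := by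
  rw [rho, Nat.primeFactors_mul hm hn, prod_union h.disjoint_primeFactors, rho, rho]

lemma rho_prime {p : ℕ} (hp : p.Prime) : rho p = 1 + 1 / (p : ℝ) := by
  rw [rho, hp.primeFactors, prod_singleton]

section MoebiusRho

open ArithmeticFunction
open scoped ArithmeticFunction.Moebius

variable (s : ℂ)

def moebiusRhoTerm (n : ℕ) : ℂ :=
  (μ n : ℂ) / ((rho n : ℂ) * (n : ℂ) ^ ((1 : ℂ) + s))

@[simp] lemma moebiusRhoTerm_zero : moebiusRhoTerm s 0 = 0 := by simp [moebiusRhoTerm]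

@[simp] lemma moebiusRhoTerm_one : moebiusRhoTerm s 1 = 1 := by simp [moebiusRhoTerm, rho]

lemma moebiusRhoTerm_mul_of_coprime {m n : ℕ} (h : m.Coprime n) :
    moebiusRhoTerm s (m * n) = moebiusRhoTerm s m * moebiusRhoTerm s n := by
  rcases eq_or_ne m 0 with rfl | hm
  · simp
  rcases eq_or_ne n 0 with rfl | hn
  · simp
  simp only [moebiusRhoTerm, isMultiplicative_moebius.map_mul_of_coprime h,
    rho_mul_of_coprime hm hn h, Nat.cast_mul, Complex.natCast_mul_natCast_cpow, Int.cast_mul,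
    Complex.ofReal_mul]
  ring

lemma moebiusRhoTerm_eq_term (n : ℕ) :
    moebiusRhoTerm s n = LSeries.term (fun n => μ n / rho n) (1 + s) n := by
  rcases eq_or_ne n 0 with rfl | hn
  · simp
  rw [LSeries.term_of_ne_zero hn, moebiusRhoTerm, div_div]

lemma norm_moebius_div_rho_le_one (n : ℕ) : ‖(μ n : ℂ) / rho n‖ ≤ 1 := by
  rw [norm_div, Complex.norm_real, Real.norm_of_nonneg (rho_pos n).le]
  refine div_le_one_of_le₀ ((?_ : ‖(μ n : ℂ)‖ ≤ 1).trans (one_le_rho n)) (rho_pos n).le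
  exact_mod_cast abs_moebius_le_one

lemma tsum_moebiusRhoTerm_prime_pow {p : ℕ} (hp : p.Prime) :
    ∑' e : ℕ, moebiusRhoTerm s (p ^ e) = 1 + moebiusRhoTerm s p := by
  rw [tsum_eq_sum (s := {0, 1}), sum_pair zero_ne_one, pow_zero, pow_one, moebiusRhoTerm_one]
  intro e he
  simp only [mem_insert, mem_singleton, not_or] at he
  simp [moebiusRhoTerm, moebius_apply_prime_pow hp he.1, he.2]

lemma one_add_moebiusRhoTerm_prime {p : ℕ} (hp : p.Prime) :
    1 + moebiusRhoTerm s p = (1 + 1 / (p : ℂ) - (p : ℂ) ^ (-s - 1)) / (1 + 1 / (p : ℂ)) := by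
  have hp₀ : (p : ℂ) ≠ 0 := Nat.cast_ne_zero.mpr hp.ne_zero
  rw [show -s - 1 = -(1 + s) by ring, Complex.cpow_neg, moebiusRhoTerm, moebius_apply_prime hp,
    rho_prime hp]
  push_cast
  field_simp
  ring

variable {s}

lemma summable_norm_moebiusRhoTerm (hs : 0 < s.re) :
    Summable fun n => ‖moebiusRhoTerm s n‖ := by
  simp_rw [moebiusRhoTerm_eq_term]
  refine summable_norm_iff.mpr (LSeriesSummable_of_bounded_of_one_lt_re
    (fun n _ => norm_moebius_div_rho_le_one n) ?_)
  simpa using hs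

lemma hasProd_moebiusRhoTerm (hs : 0 < s.re) :
    HasProd (fun p : Nat.Primes => (1 + 1 / (p : ℂ) - (p : ℂ) ^ (-s - 1)) / (1 + 1 / (p : ℂ)))
      (∑' n, moebiusRhoTerm s n) := by
  convert EulerProduct.eulerProduct_hasProd (moebiusRhoTerm_one s)
    (moebiusRhoTerm_mul_of_coprime s) (summable_norm_moebiusRhoTerm hs) (moebiusRhoTerm_zero s)
    using 2 with p
  rw [tsum_moebiusRhoTerm_prime_pow s p.prop, one_add_moebiusRhoTerm_prime s p.prop]

def alphaFactor (s : ℂ) (p : ℕ) : ℂ :=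
  (1 + 1 / (p : ℂ) - (p : ℂ) ^ (-s - 1)) / ((1 + 1 / (p : ℂ)) * (1 - (p : ℂ) ^ (-s - 1)))

lemma hasProd_alphaFactor (hs : 0 < s.re) :
    HasProd (fun p : Nat.Primes => alphaFactor s p)
      ((∑' n, moebiusRhoTerm s n) * riemannZeta (s + 1)) := by
  have hζ := riemannZeta_eulerProduct_hasProd (s := s + 1) (by simpa using hs)
  simp only [neg_add'] at hζ
  convert (hasProd_moebiusRhoTerm hs).mul hζ using 2
  rw [alphaFactor, div_mul_eq_div_div, div_eq_mul_inv _ (1 - _)]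

lemma alphaFactor_zero {p : ℕ} (hp : p.Prime) :
    alphaFactor 0 p = (1 - (p : ℂ) ^ (-(2 : ℂ)))⁻¹ := by
  have hp₁ : (p : ℂ) ≠ 1 := Nat.cast_ne_one.mpr hp.ne_one
  have hp_add_one : (p : ℂ) + 1 ≠ 0 := by exact_mod_cast p.succ_ne_zero
  rw [alphaFactor, neg_zero, zero_sub, Complex.cpow_neg_one,
    show (-2 : ℂ) = -((2 : ℕ) : ℂ) by norm_num, Complex.cpow_neg, Complex.cpow_natCast]
  have hp_sq_sub_one : (p : ℂ) ^ 2 - 1 ≠ 0 := by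
    rw [show (p : ℂ) ^ 2 - 1 = (p - 1) * (p + 1) by ring]
    exact mul_ne_zero (sub_ne_zero.mpr hp₁) hp_add_one
  field_simp
  ring

end MoebiusRho

/-- for `Re s > 0`, the series `Σ_{m≥1} μ(m)/(ρ(m) m^{1+s})` converges
absolutely, the Euler product
`α(s) = Π_p (1 + 1/p − p^{−s−1})/((1 + 1/p)(1 − p^{−s−1}))` converges, and the series
equals `α(s)/ζ(s+1)`.  Moreover `α(0) = ζ(2)`. -/
theorem moebius_over_rho_series (s : ℂ) (hs : 0 < s.re) :
    Summable (fun m : ℕ =>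
      ‖(ArithmeticFunction.moebius (m + 1) : ℂ) /
        ((rho (m + 1) : ℂ) * ((m + 1 : ℕ) : ℂ) ^ ((1 : ℂ) + s))‖) ∧
    Multipliable (fun p : Nat.Primes =>
      (1 + 1 / ((p : ℕ) : ℂ) - ((p : ℕ) : ℂ) ^ (-s - 1)) /
        ((1 + 1 / ((p : ℕ) : ℂ)) * (1 - ((p : ℕ) : ℂ) ^ (-s - 1)))) ∧
    (∑' m : ℕ, (ArithmeticFunction.moebius (m + 1) : ℂ) /
        ((rho (m + 1) : ℂ) * ((m + 1 : ℕ) : ℂ) ^ ((1 : ℂ) + s)))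
      = (∏' p : Nat.Primes,
          (1 + 1 / ((p : ℕ) : ℂ) - ((p : ℕ) : ℂ) ^ (-s - 1)) /
            ((1 + 1 / ((p : ℕ) : ℂ)) * (1 - ((p : ℕ) : ℂ) ^ (-s - 1)))) /
          riemannZeta (s + 1) ∧
    (∏' p : Nat.Primes,
        (1 + 1 / ((p : ℕ) : ℂ) - ((p : ℕ) : ℂ) ^ (-(0 : ℂ) - 1)) /
          ((1 + 1 / ((p : ℕ) : ℂ)) * (1 - ((p : ℕ) : ℂ) ^ (-(0 : ℂ) - 1))))
      = riemannZeta 2 := by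
  have hα := hasProd_alphaFactor hs
  have hζ : riemannZeta (s + 1) ≠ 0 := riemannZeta_ne_zero_of_one_lt_re (by simpa using hs)
  have hsum := summable_norm_moebiusRhoTerm hs
  refine ⟨(summable_nat_add_iff 1).mpr hsum, hα.multipliable, ?_, ?_⟩
  · change ∑' m, moebiusRhoTerm s (m + 1) = (∏' p : Nat.Primes, alphaFactor s p) / _
    rw [hα.tprod_eq, mul_div_cancel_right₀ _ hζ, hsum.of_norm.tsum_eq_zero_add,
      moebiusRhoTerm_zero, zero_add]
  · rw [← riemannZeta_eulerProduct_tprod (by norm_num)]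
    exact tprod_congr fun p => alphaFactor_zero p.prop

end
end
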